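/- arXiv:math/0612043 — 3 statements merged into one kernel-verified Lean document; each statement's English description precedes it below -/
import Mathlib

section
/- Let (W,S) be a Coxeter system, let w = w₁w₂⋯w_k be a reduced expression (each wᵢ ∈ S), and let σ ∈ {0,1}^k be a mask. If position j (2 ≤ j ≤ k) is a defect of w with respect to σ, then there exists an index i < j with σᵢ = 1 and wᵢ = w_j. -/
set_option linter.unusedSectionVars false
set_option maxHeartbeats 1600000


open List

namespace Paper

variable {B W : Type*} [Group W]

/-- The product of the subword of `ω` selected by the mask `σ`. -/
def maskProd (M : CoxeterMatrix B) (cs : CoxeterSystem M W)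
    (ω : List B) (σ : List Bool) : W :=
  cs.wordProd (((ω.zip σ).filter (fun p => p.2)).map (fun p => p.1))

/-- The product of the initial subword selected by the first `j` entries of the mask. -/
def maskProdTake (M : CoxeterMatrix B) (cs : CoxeterSystem M W)
    (ω : List B) (σ : List Bool) (j : ℕ) : W :=
  maskProd M cs (ω.take j) (σ.take j)

/-- Position `j` (zero-based; the paper's position `j+1`) is a defect of the reduced
expression `ω` with respect to the mask `σ`. -/
def IsDefect (M : CoxeterMatrix B) (cs : CoxeterSystem M W)
    (ω : List B) (σ : List Bool) (j : Fin ω.length) : Prop :=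
  cs.length (maskProdTake M cs ω σ j * cs.simple (ω.get j)) <
    cs.length (maskProdTake M cs ω σ j)

open Classical in
/-- The number of zero-defects of the mask `σ` on `ω`. -/
noncomputable def zeroDefects (M : CoxeterMatrix B) (cs : CoxeterSystem M W)
    (ω : List B) (σ : List Bool) : ℕ :=
  (Finset.univ.filter (fun j : Fin ω.length =>
    σ.getD (j : ℕ) true = false ∧ IsDefect M cs ω σ j)).card

open Classical in
/-- The number of plain-zeros of the mask `σ` on `ω`. -/
noncomputable def plainZeros (M : CoxeterMatrix B) (cs : CoxeterSystem M W)
    (ω : List B) (σ : List Bool) : ℕ :=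
  (Finset.univ.filter (fun j : Fin ω.length =>
    σ.getD (j : ℕ) true = false ∧ ¬ IsDefect M cs ω σ j)).card

/-- A mask is proper if it has the right length and contains at least one zero. -/
def ProperMask (ω : List B) (σ : List Bool) : Prop :=
  σ.length = ω.length ∧ false ∈ σ

/-- A reduced expression `ω` is Deodhar if every proper mask on it satisfies
(# zero-defects) < (# plain-zeros). -/
def IsDeodharExpr (M : CoxeterMatrix B) (cs : CoxeterSystem M W) (ω : List B) : Prop :=
  ∀ σ : List Bool, ProperMask ω σ → zeroDefects M cs ω σ < plainZeros M cs ω σ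

/-- An element is Deodhar if every (equivalently, some) reduced expression for it is Deodhar. -/
def IsDeodharElt (M : CoxeterMatrix B) (cs : CoxeterSystem M W) (w : W) : Prop :=
  ∀ ω : List B, cs.IsReduced ω → cs.wordProd ω = w → IsDeodharExpr M cs ω

section Aux



section Dihedral

variable {W : Type*} [Group W] (x y : W)

/-- Prefix products of the alternating word `x y x y ...`. -/
def dp (n : ℕ) : W := (x * y) ^ (n / 2) * (if Even n then 1 else x)

lemma dp_succ (n : ℕ) : dp x y (n + 1) = dp x y n * (if Even n then x else y) := by
  rcases Nat.even_or_odd n with ⟨i, rfl⟩ | ⟨i, rfl⟩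
  · have h1 : Even (i + i) := ⟨i, rfl⟩
    have h2 : ¬ Even (i + i + 1) := by simp [Nat.even_add_one, h1]
    have h3 : (i + i) / 2 = i := by omega
    have h4 : (i + i + 1) / 2 = i := by omega
    simp [dp, h1, h2, h3, h4]
  · have h1 : ¬ Even (2 * i + 1) := by simp [Nat.even_add_one]
    have h2 : Even (2 * i + 1 + 1) := by simp [Nat.even_add_one, h1]
    have h3 : (2 * i + 1) / 2 = i := by omega
    have h4 : (2 * i + 1 + 1) / 2 = i + 1 := by omega
    simp only [dp, h1, h2, h3, h4, if_true, if_false, mul_one, if_neg, pow_succ]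
    group

/-- The reflection sequence of the alternating word. -/
def dt (n : ℕ) : W := dp x y (n + 1) * (dp x y n)⁻¹

variable {x y} (hx : x * x = 1) (hy : y * y = 1) {m : ℕ} (hm : (x * y) ^ m = 1)

include hx hy in
lemma conj_zpow (k : ℕ) : x * (x * y) ^ k * x = ((x * y) ^ k)⁻¹ := by
  have hxi : x⁻¹ = x := by
    rw [inv_eq_iff_mul_eq_one]; exact hx
  have hyi : y⁻¹ = y := by rw [inv_eq_iff_mul_eq_one]; exact hy
  have base : x * (x * y) * x⁻¹ = (x * y)⁻¹ := by
    rw [mul_inv_rev, hyi, hxi, ← mul_assoc, hx, one_mul]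
  calc x * (x * y) ^ k * x = x * (x * y) ^ k * x⁻¹ := by rw [hxi]
    _ = (x * (x * y) * x⁻¹) ^ k := by rw [conj_pow]
    _ = ((x * y)⁻¹) ^ k := by rw [base]
    _ = ((x * y) ^ k)⁻¹ := by rw [inv_pow]

include hm in
lemma zpow_inv_eq (k : ℕ) (hk : k ≤ m) : ((x * y) ^ k)⁻¹ = (x * y) ^ (m - k) := by
  rw [inv_eq_iff_mul_eq_one, ← pow_add]
  have : k + (m - k) = m := by omega
  rw [this, hm]

include hx hy hm in
/-- Key shift lemma: `dp (m + j) = dp m * dp j`-type statement in the form we need. -/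
lemma dp_add (j : ℕ) : dp x y (j + m) = dp x y j * dp x y m := by
  rcases Nat.even_or_odd m with ⟨k, hk⟩ | ⟨k, hk⟩
  · -- m = k + k
    have hzm : ((x * y) ^ k) * ((x * y) ^ k) = 1 := by
      rw [← pow_add]; rw [hk] at hm; exact hm
    rcases Nat.even_or_odd j with ⟨i, hi⟩ | ⟨i, hi⟩
    · have e1 : Even (j + m) := by subst hk hi; exact ⟨i + k, by omega⟩
      have e2 : (j + m) / 2 = i + k := by omega
      have e3 : Even j := ⟨i, hi⟩
      have e4 : j / 2 = i := by omega
      have e5 : m / 2 = k := by omega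
      have e6 : Even m := ⟨k, hk⟩
      simp [dp, e1, e2, e3, e4, e5, e6, pow_add]
    · have e1 : ¬ Even (j + m) := by
        subst hk hi; simp [Nat.even_add, parity_simps]
      have e2 : (j + m) / 2 = i + k := by omega
      have e3 : ¬ Even j := by subst hi; simp [parity_simps]
      have e4 : j / 2 = i := by omega
      have e5 : m / 2 = k := by omega
      have e6 : Even m := ⟨k, hk⟩
      simp only [dp, e1, e2, e3, e4, e5, e6, if_true, if_false, if_neg, if_pos, mul_one]
      -- goal : (x*y)^(i+k) * x = (x*y)^i * x * ((x*y)^k * 1)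
      have h1 : x * (x * y) ^ k * x = (x * y) ^ k := by
        rw [conj_zpow hx hy, inv_eq_iff_mul_eq_one]; exact hzm
      have h2 : x * (x * y) ^ k = (x * y) ^ k * x := by
        calc x * (x * y) ^ k = x * (x * y) ^ k * (x * x) := by rw [hx, mul_one]
          _ = (x * (x * y) ^ k * x) * x := by group
          _ = (x * y) ^ k * x := by rw [h1]
      rw [pow_add, mul_assoc, ← h2, ← mul_assoc]
  · -- m = 2k+1
    have hk' : m = 2 * k + 1 := hk
    rcases Nat.even_or_odd j with ⟨i, hi⟩ | ⟨i, hi⟩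
    · have e1 : ¬ Even (j + m) := by subst hk' hi; simp [parity_simps]
      have e2 : (j + m) / 2 = i + k := by omega
      have e3 : Even j := ⟨i, hi⟩
      have e4 : j / 2 = i := by omega
      have e5 : m / 2 = k := by omega
      have e6 : ¬ Even m := by subst hk'; simp [parity_simps]
      simp only [dp, e1, e2, e3, e4, e5, e6, if_true, if_false, if_neg, if_pos, mul_one]
      rw [pow_add]; group
    · have e1 : Even (j + m) := by subst hk' hi; exact ⟨i + k + 1, by omega⟩
      have e2 : (j + m) / 2 = i + k + 1 := by omega
      have e3 : ¬ Even j := by subst hi; simp [parity_simps]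
      have e4 : j / 2 = i := by omega
      have e5 : m / 2 = k := by omega
      have e6 : ¬ Even m := by subst hk'; simp [parity_simps]
      simp only [dp, e1, e2, e3, e4, e5, e6, if_true, if_false, if_neg, if_pos, mul_one]
      -- goal : (x*y)^(i+k+1) = (x*y)^i * x * ((x*y)^k * x)
      have h7 : x * (x * y) ^ k * x = (x * y) ^ (m - k) := by
        rw [conj_zpow hx hy, zpow_inv_eq hm k (by omega)]
      have h8 : m - k = k + 1 := by omega
      rw [h8] at h7
      calc (x * y) ^ (i + k + 1) = (x * y) ^ i * (x * y) ^ (k + 1) := by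
              rw [add_assoc, pow_add]
        _ = (x * y) ^ i * (x * (x * y) ^ k * x) := by rw [h7]
        _ = (x * y) ^ i * x * ((x * y) ^ k * x) := by group

include hx hy hm in
lemma dt_add (j : ℕ) : dt x y (j + m) = dt x y j := by
  unfold dt
  rw [show j + m + 1 = (j + 1) + m by omega, dp_add hx hy hm, dp_add hx hy hm]
  group

end Dihedral


section Cocycle


variable {B W : Type*} [Group W] (M : CoxeterMatrix B) (cs : CoxeterSystem M W)

local prefix:100 "ss" => cs.simple
local prefix:100 "π" => cs.wordProd
local prefix:100 "ℓ" => cs.length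

abbrev AW (W : Type*) : Type _ := W → Multiplicative (ZMod 2)

lemma AW.mul_self (φ : AW W) : φ * φ = 1 := by
  funext t
  show φ t * φ t = 1
  have : ∀ g : Multiplicative (ZMod 2), g * g = 1 := by decide
  exact this _

def conjAct (w : W) : AW W ≃* AW W where
  toFun ψ := fun t => ψ (w⁻¹ * t * w)
  invFun ψ := fun t => ψ (w * t * w⁻¹)
  left_inv ψ := by funext t; group
  right_inv ψ := by funext t; group
  map_mul' ψ χ := rfl

def conjHom : W →* MulAut (AW W) where
  toFun := conjAct
  map_one' := by ext ψ t; simp [conjAct]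
  map_mul' v w := by
    ext ψ t
    show ψ ((v * w)⁻¹ * t * (v * w)) = ψ (w⁻¹ * (v⁻¹ * t * v) * w)
    group

open Classical in
noncomputable def chi (u : W) : AW W := fun t =>
  if t = u then Multiplicative.ofAdd 1 else 1

lemma conjHom_apply (w : W) (ψ : AW W) (t : W) : conjHom w ψ t = ψ (w⁻¹ * t * w) := rfl

lemma conjHom_chi (w u : W) : conjHom w (chi u) = chi (w * u * w⁻¹) := by
  classical
  funext t
  show chi u (w⁻¹ * t * w) = chi (w * u * w⁻¹) t
  unfold chi
  congr 1
  simp only [eq_iff_iff]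
  constructor
  · rintro h; rw [← h]; group
  · rintro rfl; group

lemma chi_apply_self (u : W) : chi u u = Multiplicative.ofAdd (1 : ZMod 2) := by
  classical simp [chi]

lemma sdp_pow (ψ : AW W) (z : W) (n : ℕ) :
    ((⟨ψ, z⟩ : AW W ⋊[conjHom] W) ^ n) =
      ⟨∏ k ∈ Finset.range n, conjHom (z ^ k) ψ, z ^ n⟩ := by
  induction n with
  | zero => ext <;> simp
  | succ n ih =>
      rw [pow_succ, ih, SemidirectProduct.mul_def]
      refine SemidirectProduct.ext ?_ ?_ <;> dsimp only
      · rw [Finset.prod_range_succ]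
      · rw [pow_succ]

lemma prod_pair {A : Type*} [CommMonoid A] (f : ℕ → A) (m : ℕ) :
    ∏ k ∈ Finset.range m, (f (2 * k) * f (2 * k + 1)) = ∏ j ∈ Finset.range (2 * m), f j := by
  induction m with
  | zero => simp
  | succ n ih =>
      rw [Finset.prod_range_succ, ih, show 2 * (n + 1) = (2 * n + 1) + 1 by omega,
        Finset.prod_range_succ, Finset.prod_range_succ, mul_assoc]

lemma dp_even (x y : W) (k : ℕ) : dp x y (2 * k) = (x * y) ^ k := by
  have h : (2 * k) / 2 = k := by omega
  have h2 : Even (2 * k) := ⟨k, by omega⟩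
  simp [dp, h, h2]

lemma dp_odd (x y : W) (k : ℕ) : dp x y (2 * k + 1) = (x * y) ^ k * x := by
  have h : (2 * k + 1) / 2 = k := by omega
  have h2 : ¬ Even (2 * k + 1) := by simp [Nat.even_add_one]
  simp [dp, h, h2]


end Cocycle

namespace Part1


variable {B W : Type*} [Group W] (M : CoxeterMatrix B) (cs : CoxeterSystem M W)

local prefix:100 "ss" => cs.simple
local prefix:100 "π" => cs.wordProd
local prefix:100 "ℓ" => cs.length

noncomputable def FF : B → (AW W ⋊[conjHom] W) := fun a => ⟨chi (cs.simple a), cs.simple a⟩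

lemma FF_liftable : M.IsLiftable (FF M cs) := by
  intro a b
  set x := cs.simple a with hxd
  set y := cs.simple b with hyd
  set m := M a b with hmdef
  have hx : x * x = 1 := cs.simple_mul_simple_self a
  have hy : y * y = 1 := cs.simple_mul_simple_self b
  have hm : (x * y) ^ m = 1 := cs.simple_mul_simple_pow a b
  have hxinv : x⁻¹ = x := cs.inv_simple a
  have hmul : FF M cs a * FF M cs b = ⟨chi x * chi (x * y * x), x * y⟩ := by
    rw [show FF M cs a = ⟨chi x, x⟩ from rfl, show FF M cs b = ⟨chi y, y⟩ from rfl,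
      SemidirectProduct.mul_def]
    refine SemidirectProduct.ext ?_ rfl
    dsimp only
    rw [conjHom_chi, hxinv]
  rw [hmul, sdp_pow]
  refine SemidirectProduct.ext ?_ hm
  dsimp only
  have key : ∀ k : ℕ, conjHom ((x * y) ^ k) (chi x * chi (x * y * x))
      = chi (dt x y (2 * k)) * chi (dt x y (2 * k + 1)) := by
    intro k
    rw [map_mul, conjHom_chi, conjHom_chi]
    congr 2
    · rw [dt, dp_odd, dp_even]
    · rw [dt, show 2 * k + 1 + 1 = 2 * (k + 1) by omega, dp_even, dp_odd,
        mul_inv_rev, hxinv, pow_succ]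
      group
  calc ∏ k ∈ Finset.range m, conjHom ((x * y) ^ k) (chi x * chi (x * y * x))
      = ∏ k ∈ Finset.range m, (chi (dt x y (2 * k)) * chi (dt x y (2 * k + 1))) :=
        Finset.prod_congr rfl (fun k _ => key k)
    _ = ∏ j ∈ Finset.range (2 * m), chi (dt x y j) := prod_pair (fun j => chi (dt x y j)) m
    _ = (∏ j ∈ Finset.range m, chi (dt x y j)) * ∏ j ∈ Finset.range m, chi (dt x y (m + j)) := by
        rw [show 2 * m = m + m by omega, Finset.prod_range_add]
    _ = (∏ j ∈ Finset.range m, chi (dt x y j)) * ∏ j ∈ Finset.range m, chi (dt x y j) := by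
        congr 1
        exact Finset.prod_congr rfl (fun j _ => by rw [add_comm m j, dt_add hx hy hm])
    _ = 1 := AW.mul_self _

noncomputable def rho : W →* (AW W ⋊[conjHom] W) := cs.lift ⟨FF M cs, FF_liftable M cs⟩

lemma rho_simple (a : B) : rho M cs (ss a) = FF M cs a :=
  cs.lift_apply_simple (FF_liftable M cs) a

lemma rho_right (w : W) : (rho M cs w).right = w :=
  cs.simple_induction (p := fun w => (rho M cs w).right = w) w
    (fun i => by show ((rho M cs) (cs.simple i)).right = cs.simple i; rw [rho_simple]; rfl)
    (by show ((rho M cs) 1).right = 1; rw [map_one]; rfl)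
    (fun w₁ w₂ h₁ h₂ => by
      show ((rho M cs) (w₁ * w₂)).right = w₁ * w₂
      rw [map_mul, SemidirectProduct.mul_right, h₁, h₂])

noncomputable def nn (w : W) : AW W := (rho M cs w).left

lemma nn_mul (v w : W) : nn M cs (v * w) = nn M cs v * conjHom v (nn M cs w) := by
  unfold nn
  rw [map_mul, SemidirectProduct.mul_left, rho_right]

lemma nn_one : nn M cs 1 = 1 := by
  unfold nn; rw [map_one]; rfl

lemma nn_simple (a : B) : nn M cs (ss a) = chi (ss a) := by
  unfold nn; rw [rho_simple]; rfl

lemma nn_inv (w : W) : nn M cs w⁻¹ = conjHom w⁻¹ (nn M cs w) := by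
  have h := nn_mul M cs w w⁻¹
  rw [mul_inv_cancel, nn_one] at h
  have h2 : conjHom w (nn M cs w⁻¹) = (nn M cs w)⁻¹ := by
    rw [inv_eq_of_mul_eq_one_right h.symm]
  have h3 : (nn M cs w)⁻¹ = nn M cs w := inv_eq_of_mul_eq_one_right (AW.mul_self _)
  calc nn M cs w⁻¹ = conjHom w⁻¹ (conjHom w (nn M cs w⁻¹)) := by
        rw [← MulAut.mul_apply, ← map_mul, inv_mul_cancel, map_one, MulAut.one_apply]
    _ = conjHom w⁻¹ (nn M cs w) := by rw [h2, h3]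

lemma nn_wordProd (l : List B) : nn M cs (π l) = ((cs.leftInvSeq l).map chi).prod := by
  induction l with
  | nil => rw [CoxeterSystem.wordProd_nil, nn_one]; rfl
  | cons a l ih =>
      rw [CoxeterSystem.wordProd_cons, nn_mul, nn_simple, ih]
      rw [show cs.leftInvSeq (a :: l) = ss a :: List.map (MulAut.conj (ss a)) (cs.leftInvSeq l)
        from rfl]
      rw [List.map_cons, List.prod_cons, List.map_map]
      congr 1
      rw [map_list_prod, List.map_map]
      refine congrArg List.prod (List.map_congr_left (fun u _ => ?_))
      show conjHom (ss a) (chi u) = chi (MulAut.conj (ss a) u)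
      rw [conjHom_chi, MulAut.conj_apply]

lemma chi_prod_eq_one_of_not_mem (L : List W) (t : W) (h : t ∉ L) :
    ((L.map chi).prod) t = 1 := by
  classical
  induction L with
  | nil => rfl
  | cons u L ih =>
      rw [List.map_cons, List.prod_cons]
      have h1 : t ≠ u := fun he => h (he ▸ List.mem_cons_self (a := u) (l := L))
      have h2 : t ∉ L := fun he => h (List.mem_cons_of_mem _ he)
      show chi u t * ((L.map chi).prod) t = 1
      rw [ih h2, mul_one]
      simp [chi, h1]

lemma nn_conj_self (w : W) (b : B) :
    nn M cs (w * ss b * w⁻¹) (w * ss b * w⁻¹) = Multiplicative.ofAdd (1 : ZMod 2) := by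
  set t := w * ss b * w⁻¹ with htd
  have e1 : nn M cs t = nn M cs w * conjHom w (chi (ss b)) * conjHom t (nn M cs w) := by
    rw [htd, mul_assoc w (ss b) w⁻¹, nn_mul, nn_mul, nn_simple, nn_inv, map_mul, ← mul_assoc]
    congr 1
    funext u
    simp only [conjHom_apply]
    congr 1
    group
  have e2 : conjHom w (chi (ss b)) t = Multiplicative.ofAdd (1 : ZMod 2) := by
    rw [conjHom_chi, htd]
    exact chi_apply_self _
  have e3 : (conjHom t (nn M cs w)) t = nn M cs w t := by
    show nn M cs w (t⁻¹ * t * t) = nn M cs w t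
    rw [inv_mul_cancel, one_mul]
  have expand : nn M cs t t
      = nn M cs w t * (conjHom w (chi (ss b))) t * (conjHom t (nn M cs w)) t := by
    rw [e1]; rfl
  rw [expand, e2, e3]
  have : ∀ g : Multiplicative (ZMod 2),
      g * Multiplicative.ofAdd (1 : ZMod 2) * g = Multiplicative.ofAdd (1 : ZMod 2) := by decide
  exact this _

/-- Strong exchange property, for arbitrary (not necessarily reduced) words. -/
theorem strong_exchange (l : List B) (w : W) (b : B)
    (ht : ℓ ((w * ss b * w⁻¹) * π l) < ℓ (π l)) :
    (w * ss b * w⁻¹) ∈ cs.leftInvSeq l := by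
  set t := w * ss b * w⁻¹ with htd
  by_contra hmem
  have h0 : nn M cs (π l) t = 1 := by
    rw [nn_wordProd]
    exact chi_prod_eq_one_of_not_mem _ _ hmem
  have htt : t * t = 1 := by
    rw [htd]
    calc w * ss b * w⁻¹ * (w * ss b * w⁻¹)
        = w * (ss b * (w⁻¹ * w) * ss b) * w⁻¹ := by group
      _ = 1 := by rw [inv_mul_cancel, mul_one, cs.simple_mul_simple_self, mul_one, mul_inv_cancel]
  have h1 : nn M cs (t * π l) t = Multiplicative.ofAdd (1 : ZMod 2) := by
    rw [nn_mul]
    show nn M cs t t * (conjHom t (nn M cs (π l))) t = _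
    have e3 : (conjHom t (nn M cs (π l))) t = nn M cs (π l) t := by
      show nn M cs (π l) (t⁻¹ * t * t) = _
      rw [inv_mul_cancel, one_mul]
    rw [e3, h0, mul_one, htd, nn_conj_self]
  obtain ⟨τ, hτred, hτ⟩ := cs.exists_reduced_word' (t * π l)
  have h2 : t ∈ cs.leftInvSeq τ := by
    by_contra hmem2
    have : nn M cs (t * π l) t = 1 := by
      rw [hτ, nn_wordProd]
      exact chi_prod_eq_one_of_not_mem _ _ hmem2
    rw [h1] at this
    exact absurd this (by decide)
  have h3 := (cs.isLeftInversion_of_mem_leftInvSeq hτred h2).2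
  rw [← hτ, ← mul_assoc, htt, one_mul] at h3
  omega


end Part1

namespace Part2

open CoxeterSystem

variable {B W : Type*} [Group W] (M : CoxeterMatrix B) (cs : CoxeterSystem M W)

lemma exists_descent_of_not_reduced (l : List B) (h : ¬ cs.IsReduced l) :
    ∃ i : ℕ, ∃ hi : i < l.length,
      cs.length (cs.wordProd (l.take i) * cs.simple l[i]) <
        cs.length (cs.wordProd (l.take i)) := by
  induction l using List.reverseRecOn with
  | nil => exact absurd (by simp [CoxeterSystem.IsReduced]) h
  | append_singleton l c ih =>
    by_cases hd : cs.length (cs.wordProd l * cs.simple c) < cs.length (cs.wordProd l)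
    · refine ⟨l.length, by simp, ?_⟩
      have h1 : (l ++ [c]).take l.length = l := by
        rw [List.take_append_of_le_length (le_refl _), List.take_length]
      have h2 : (l ++ [c])[l.length] = c := by
        simp
      rw [h1, h2]
      exact hd
    · have hne := cs.length_mul_simple_ne (cs.wordProd l) c
      have hasc : cs.length (cs.wordProd l * cs.simple c) = cs.length (cs.wordProd l) + 1 := by
        rcases cs.length_mul_simple (cs.wordProd l) c with h1 | h1
        · exact h1
        · omega
      have hlen : cs.length (cs.wordProd (l ++ [c])) = cs.length (cs.wordProd l) + 1 := by
        rw [cs.wordProd_append, ← hasc]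
        congr 1
        rw [cs.wordProd_cons, cs.wordProd_nil, mul_one]
      have hnr : ¬ cs.IsReduced l := by
        intro hrl
        apply h
        unfold CoxeterSystem.IsReduced at *
        rw [hlen, hrl, List.length_append, List.length_singleton]
      obtain ⟨i, hi, hlt⟩ := ih hnr
      refine ⟨i, by simp; omega, ?_⟩
      have h1 : (l ++ [c]).take i = l.take i := List.take_append_of_le_length (by omega)
      have h2 : (l ++ [c])[i]'(by simp; omega) = l[i] := List.getElem_append_left hi
      rw [h1, h2]
      exact hlt

theorem exists_reduced_subword : ∀ (n : ℕ) (l : List B), l.length ≤ n →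
    ∃ τ, cs.IsReduced τ ∧ cs.wordProd τ = cs.wordProd l ∧ ∀ c ∈ τ, c ∈ l := by
  intro n
  induction n with
  | zero =>
    intro l hl
    have : l = [] := List.eq_nil_of_length_eq_zero (by omega)
    subst this
    exact ⟨[], by simp [CoxeterSystem.IsReduced], rfl, by simp⟩
  | succ n ih =>
    intro l hl
    by_cases hr : cs.IsReduced l
    · exact ⟨l, hr, rfl, fun c hc => hc⟩
    obtain ⟨i, hi, hlt⟩ := exists_descent_of_not_reduced M cs l hr
    set u := cs.wordProd (l.take i) with hu
    set b := l[i] with hb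
    have hconj : cs.length ((u * cs.simple b * u⁻¹) * cs.wordProd (l.take i)) <
        cs.length (cs.wordProd (l.take i)) := by
      rw [← hu]
      have : u * cs.simple b * u⁻¹ * u = u * cs.simple b := by group
      rw [this]
      exact hlt
    have hmem := Part1.strong_exchange M cs (l.take i) u b hconj
    obtain ⟨k, hk, hkeq⟩ := List.mem_iff_getElem.mp hmem
    have hklen : k < (l.take i).length := by
      rw [← cs.length_leftInvSeq (l.take i)]
      exact hk
    have herase := cs.getD_leftInvSeq_mul_wordProd (l.take i) k
    rw [List.getD_eq_getElem _ _ hk, hkeq] at herase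
    set l' := ((l.take i).eraseIdx k) ++ l.drop (i + 1) with hl'
    have hπ : cs.wordProd l' = cs.wordProd l := by
      rw [hl', cs.wordProd_append, ← herase]
      have hsplit : cs.wordProd l = cs.wordProd (l.take (i+1)) * cs.wordProd (l.drop (i+1)) := by
        rw [← cs.wordProd_append, List.take_append_drop]
      rw [hsplit]
      congr 1
      have htake : l.take (i + 1) = l.take i ++ [b] := by
        rw [List.take_succ]
        congr 1
        rw [List.getElem?_eq_getElem hi]
        rfl
      rw [htake, cs.wordProd_append, ← hu]
      rw [cs.wordProd_cons, cs.wordProd_nil, mul_one]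
      group
    have hlen' : l'.length ≤ n := by
      have e1 : (l.take i).length = i := by
        rw [List.length_take]; omega
      have e2 : ((l.take i).eraseIdx k).length + 1 = (l.take i).length :=
        List.length_eraseIdx_add_one hklen
      have e3 : (l.drop (i + 1)).length = l.length - (i + 1) := List.length_drop
      rw [hl', List.length_append]
      omega
    obtain ⟨τ, h1, h2, h3⟩ := ih l' hlen'
    refine ⟨τ, h1, by rw [h2, hπ], fun c hc => ?_⟩
    have hc' := h3 c hc
    rw [hl'] at hc'
    rcases List.mem_append.mp hc' with hc1 | hc1
    · exact List.take_subset i l (List.mem_of_mem_eraseIdx hc1)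
    · exact List.drop_subset _ l hc1

end Part2

namespace Part3

open Real Finsupp

variable {B : Type*} (M : CoxeterMatrix B)

noncomputable def kk (a b : B) : ℝ := - Real.cos (Real.pi / M a b)

noncomputable def inn (a : B) : (B →₀ ℝ) →ₗ[ℝ] ℝ :=
  Finsupp.linearCombination ℝ (fun d => kk M a d)

lemma inn_single (a d : B) : inn M a (Finsupp.single d 1) = kk M a d := by
  simp [inn]

lemma kk_self (a : B) : kk M a a = 1 := by
  simp [kk]

lemma kk_symm (a b : B) : kk M a b = kk M b a := by
  rw [kk, kk, M.symmetric a b]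

noncomputable def sig (a : B) : Module.End ℝ (B →₀ ℝ) :=
  LinearMap.id - ((2:ℝ) • (inn M a).smulRight (Finsupp.single a (1:ℝ)))

lemma sig_apply (a : B) (v : B →₀ ℝ) :
    sig M a v = v - (2 * inn M a v) • Finsupp.single a 1 := by
  simp [sig, mul_smul]

/-- The two-dimensional rotation step. -/
def step (c : ℝ) : ℝ × ℝ → ℝ × ℝ :=
  fun pq => ((4 * c ^ 2 - 1) * pq.1 - 2 * c * pq.2, 2 * c * pq.1 - pq.2)

lemma sig_fixes (a : B) (r : B →₀ ℝ) (hr : inn M a r = 0) : sig M a r = r := by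
  rw [sig_apply, hr]
  simp

lemma step_apply {a b : B} (hab : a ≠ b) {m : ℕ} (hm : M a b = m)
    (p q : ℝ) (r : B →₀ ℝ) (hr1 : inn M a r = 0) (hr2 : inn M b r = 0) :
    (sig M a * sig M b) (p • Finsupp.single a 1 + q • Finsupp.single b 1 + r)
      = (step (Real.cos (Real.pi / m)) (p, q)).1 • Finsupp.single a 1
        + (step (Real.cos (Real.pi / m)) (p, q)).2 • Finsupp.single b 1 + r := by
  set c := Real.cos (Real.pi / m) with hc
  have hkab : kk M a b = -c := by rw [kk, hm]
  have hkba : kk M b a = -c := by rw [← kk_symm, hkab]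
  show sig M a (sig M b _) = _
  have h1 : sig M b (p • Finsupp.single a 1 + q • Finsupp.single b 1 + r)
      = p • Finsupp.single a 1 + (2 * c * p - q) • Finsupp.single b 1 + r := by
    rw [sig_apply]
    rw [map_add, map_add, map_smul, map_smul, inn_single, inn_single, kk_self, hkba, hr2]
    simp only [smul_eq_mul, mul_one, mul_neg, add_zero]
    module
  rw [h1, sig_apply]
  rw [map_add, map_add, map_smul, map_smul, inn_single, inn_single, kk_self, hkab, hr1]
  simp only [smul_eq_mul, mul_one, mul_neg, add_zero, step]
  module

section Rotation

open Complex

lemma expI_eq (θ : ℝ) :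
    Complex.exp ((θ:ℂ) * I) = (Real.cos θ : ℂ) + (Real.sin θ : ℂ) * I := by
  rw [Complex.exp_mul_I, ← Complex.ofReal_cos, ← Complex.ofReal_sin]

lemma expI_inv_eq (θ : ℝ) :
    (Complex.exp ((θ:ℂ) * I))⁻¹ = (Real.cos θ : ℂ) - (Real.sin θ : ℂ) * I := by
  rw [← Complex.exp_neg, show -((θ:ℂ) * I) = ((-θ : ℝ) : ℂ) * I by push_cast; ring,
    Complex.exp_mul_I, ← Complex.ofReal_cos, ← Complex.ofReal_sin, Real.cos_neg, Real.sin_neg]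
  push_cast
  ring

noncomputable def iotaC (θ : ℝ) (pq : ℝ × ℝ) : ℂ :=
  (pq.1 : ℂ) + (pq.2 : ℂ) * (-(Complex.exp ((θ:ℂ) * I))⁻¹)

lemma iotaC_inj {θ : ℝ} (hs : Real.sin θ ≠ 0) {u v : ℝ × ℝ}
    (h : iotaC θ u = iotaC θ v) : u = v := by
  unfold iotaC at h
  rw [expI_inv_eq] at h
  have h2 : u.2 = v.2 := by
    have := congrArg Complex.im h
    simp at this
    rcases this with h' | h'
    · exact h'
    · exact absurd h' hs
  have h1 : u.1 = v.1 := by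
    have := congrArg Complex.re h
    simp at this
    rw [h2] at this
    linarith
  exact Prod.ext h1 h2

lemma iotaC_step (θ : ℝ) (pq : ℝ × ℝ) :
    iotaC θ (step (Real.cos θ) pq) = (Complex.exp ((θ:ℂ) * I))^2 * iotaC θ pq := by
  obtain ⟨p, q⟩ := pq
  set E := Complex.exp ((θ:ℂ) * I) with hEd
  have hcE : Complex.cos (θ:ℂ) = (E + E⁻¹)/2 := by
    rw [hEd, expI_inv_eq, expI_eq, ← Complex.ofReal_cos]
    ring
  have hE0 : E ≠ 0 := Complex.exp_ne_zero _
  unfold iotaC step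
  push_cast
  rw [hcE, ← hEd]
  field_simp
  ring

lemma iotaC_iter (θ : ℝ) (n : ℕ) (pq : ℝ × ℝ) :
    iotaC θ ((step (Real.cos θ))^[n] pq) = (Complex.exp ((θ:ℂ) * I))^(2*n) * iotaC θ pq := by
  induction n with
  | zero => simp
  | succ n ih =>
      rw [Function.iterate_succ_apply', iotaC_step, ih, show 2*(n+1) = 2*n + 2 by omega,
        pow_add]
      ring

lemma step_iterate_id {m : ℕ} (hm : 2 ≤ m) (pq : ℝ × ℝ) :
    (step (Real.cos (Real.pi / m)))^[m] pq = pq := by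
  set θ := Real.pi / m with hθ
  have hm0 : (0:ℝ) < (m:ℝ) := by exact_mod_cast (by omega : 0 < m)
  have hθpos : 0 < θ := by
    rw [hθ]
    exact div_pos Real.pi_pos hm0
  have hθlt : θ < Real.pi := by
    rw [hθ, div_lt_iff₀ hm0]
    nlinarith [Real.pi_pos, show (2:ℝ) ≤ (m:ℝ) from by exact_mod_cast hm]
  have hs : Real.sin θ ≠ 0 := ne_of_gt (Real.sin_pos_of_pos_of_lt_pi hθpos hθlt)
  have hmC : (m:ℂ) ≠ 0 := Nat.cast_ne_zero.mpr (by omega)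
  have hpow : (Complex.exp ((θ:ℂ) * I))^(2*m) = 1 := by
    rw [← Complex.exp_nat_mul]
    rw [show ((2*m : ℕ):ℂ) * ((θ:ℂ) * I) = 2 * (Real.pi:ℝ) * I by
      rw [hθ]; push_cast; field_simp]
    exact Complex.exp_two_pi_mul_I
  apply iotaC_inj hs
  rw [iotaC_iter, hpow, one_mul]

end Rotation

lemma sig_invol (a : B) : sig M a * sig M a = 1 := by
  apply LinearMap.ext
  intro v
  show sig M a (sig M a v) = v
  rw [sig_apply, sig_apply, map_sub, map_smul, inn_single, kk_self]
  simp only [smul_eq_mul, mul_one]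
  module

lemma sig_liftable : M.IsLiftable (fun a => sig M a) := by
  intro a b
  by_cases hab : a = b
  · subst hab
    rw [M.diagonal a, pow_one]
    exact sig_invol M a
  rcases Nat.eq_zero_or_pos (M a b) with hm0 | hmpos
  · rw [hm0, pow_zero]
  have hm2 : 2 ≤ M a b := by
    have := M.off_diagonal a b hab
    omega
  set m := M a b with hmd
  apply LinearMap.ext
  intro v
  show ((sig M a * sig M b) ^ m) v = v
  set θ := Real.pi / m with hθd
  set c := Real.cos θ with hcd
  have hm0R : (0:ℝ) < (m:ℝ) := by exact_mod_cast (by omega : 0 < m)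
  have hθpos : 0 < θ := by rw [hθd]; exact div_pos Real.pi_pos hm0R
  have hθlt : θ < Real.pi := by
    rw [hθd, div_lt_iff₀ hm0R]
    nlinarith [Real.pi_pos, show (2:ℝ) ≤ (m:ℝ) from by exact_mod_cast hm2]
  have hs : Real.sin θ ≠ 0 := ne_of_gt (Real.sin_pos_of_pos_of_lt_pi hθpos hθlt)
  have hden : 1 - c^2 ≠ 0 := by
    have hsin2 : Real.sin θ ^ 2 = 1 - c ^ 2 := by
      nlinarith [Real.sin_sq_add_cos_sq θ]
    intro h
    apply hs
    have h0 : Real.sin θ ^ 2 = 0 := by rw [hsin2]; linarith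
    exact pow_eq_zero_iff (by norm_num) |>.mp h0
  set p := (inn M a v + c * inn M b v) / (1 - c^2) with hp
  set q := (inn M b v + c * inn M a v) / (1 - c^2) with hq
  set r := v - p • Finsupp.single a 1 - q • Finsupp.single b 1 with hr
  have hkab : kk M a b = -c := by rw [kk, ← hmd, ← hθd, ← hcd]
  have hkba : kk M b a = -c := by rw [← kk_symm, hkab]
  have hr1 : inn M a r = 0 := by
    rw [hr, map_sub, map_sub, map_smul, map_smul, inn_single, inn_single, kk_self, hkab]
    simp only [smul_eq_mul, mul_one]
    rw [hp, hq]
    field_simp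
    ring
  have hr2 : inn M b r = 0 := by
    rw [hr, map_sub, map_sub, map_smul, map_smul, inn_single, inn_single, kk_self, hkba]
    simp only [smul_eq_mul, mul_one]
    rw [hp, hq]
    field_simp
    ring
  have hdecomp : v = p • Finsupp.single a 1 + q • Finsupp.single b 1 + r := by
    rw [hr]
    module
  have hiter : ∀ n : ℕ, ((sig M a * sig M b) ^ n) v
      = ((step c)^[n] (p,q)).1 • Finsupp.single a 1
        + ((step c)^[n] (p,q)).2 • Finsupp.single b 1 + r := by
    intro n
    induction n with
    | zero => simpa using hdecomp
    | succ n ih =>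
        rw [pow_succ']
        show (sig M a * sig M b) (((sig M a * sig M b) ^ n) v) = _
        rw [ih, Function.iterate_succ_apply']
        exact step_apply M hab hmd.symm _ _ r hr1 hr2
  rw [hiter m]
  have hid : (step c)^[m] (p, q) = (p, q) := by
    rw [hcd, hθd]
    exact step_iterate_id hm2 _
  rw [hid]
  exact hdecomp.symm

theorem simple_injective {W : Type*} [Group W] (cs : CoxeterSystem M W) :
    Function.Injective cs.simple := by
  intro a b hab
  by_contra hne
  have h1 := cs.lift_apply_simple (sig_liftable M) a
  have h2 := cs.lift_apply_simple (sig_liftable M) b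
  have hσ : sig M a = sig M b := by rw [← h1, ← h2, hab]
  have hL : sig M a (Finsupp.single a 1) = (-1 : ℝ) • Finsupp.single a (1:ℝ) := by
    rw [sig_apply, inn_single, kk_self]
    module
  have hR : sig M b (Finsupp.single a 1)
      = Finsupp.single a 1 - (2 * kk M b a) • Finsupp.single b (1:ℝ) := by
    rw [sig_apply, inn_single]
  have heq : (-1 : ℝ) • Finsupp.single a (1:ℝ)
      = Finsupp.single a 1 - (2 * kk M b a) • Finsupp.single b (1:ℝ) := by
    rw [← hL, hσ, hR]
  have hev := congrArg (fun v : B →₀ ℝ => v a) heq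
  simp only [Finsupp.smul_apply, Finsupp.sub_apply, Finsupp.single_eq_same,
    Finsupp.single_eq_of_ne' (fun h : b = a => hne h.symm), smul_eq_mul] at hev
  norm_num at hev

end Part3

end Aux

/-- If position `j` is a defect of the reduced expression `ω` with respect to
the mask `σ`, then there is an earlier position `i < j` with mask-value 1 carrying the same
generator (a critical generator). -/


theorem exists_critical_generator {B W : Type*} [Group W] (M : CoxeterMatrix B)
    (cs : CoxeterSystem M W) (ω : List B) (σ : List Bool)
    (hred : cs.IsReduced ω) (hlen : σ.length = ω.length)
    (j : Fin ω.length) (hdef : IsDefect M cs ω σ j) :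
    ∃ i : Fin ω.length, (i : ℕ) < (j : ℕ) ∧ σ.getD (i : ℕ) false = true ∧
      ω.get i = ω.get j := by
  classical
  set μ : List B :=
    (((ω.take (j:ℕ)).zip (σ.take (j:ℕ))).filter (fun p => p.2)).map (fun p => p.1) with hμ
  set b : B := ω.get j with hbd
  set u : W := cs.wordProd μ with hud
  have hu : maskProdTake M cs ω σ (j:ℕ) = u := rfl
  have hdef' : cs.length (u * cs.simple b) < cs.length u := by
    rw [← hu]
    exact hdef
  have hconj : cs.length ((u * cs.simple b * u⁻¹) * cs.wordProd μ) <
      cs.length (cs.wordProd μ) := by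
    rw [← hud]
    have e : u * cs.simple b * u⁻¹ * u = u * cs.simple b := by group
    rw [e]
    exact hdef'
  have hmem := Part1.strong_exchange M cs μ u b hconj
  obtain ⟨k, hk, hkeq⟩ := List.mem_iff_getElem.mp hmem
  have hklen : k < μ.length := by
    rw [← cs.length_leftInvSeq μ]
    exact hk
  -- t = q * s μ[k] * q⁻¹ with q = π (μ.take k)
  have hgetd := cs.getD_leftInvSeq μ k
  rw [List.getD_eq_getElem _ _ hk, hkeq] at hgetd
  have hget? : μ[k]? = some μ[k] := by
    rw [List.getElem?_eq_getElem hklen]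
  rw [hget?] at hgetd
  simp only [Option.map_some, Option.getD_some] at hgetd
  -- now: u * s b * u⁻¹ = π (μ.take k) * s μ[k] * (π (μ.take k))⁻¹
  set ν : List B := μ.reverse ++ (μ.take k ++ ([μ[k]] ++ ((μ.take k).reverse ++ μ))) with hν
  have hsb : cs.simple b = cs.wordProd ν := by
    rw [hν]
    repeat rw [cs.wordProd_append]
    rw [CoxeterSystem.wordProd_reverse, CoxeterSystem.wordProd_reverse]
    have hone : cs.wordProd [μ[k]] = cs.simple μ[k] := by
      rw [cs.wordProd_cons, cs.wordProd_nil, mul_one]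
    rw [hone]
    have : cs.wordProd μ = u := hud.symm
    rw [this]
    calc cs.simple b
        = u⁻¹ * (u * cs.simple b * u⁻¹) * u := by group
      _ = u⁻¹ * (cs.wordProd (μ.take k) * cs.simple μ[k] * (cs.wordProd (μ.take k))⁻¹) * u := by
          rw [hgetd]
      _ = u⁻¹ * (cs.wordProd (μ.take k) * (cs.simple μ[k] * ((cs.wordProd (μ.take k))⁻¹ * u))) := by
          group
  obtain ⟨τ, hτred, hτprod, hτsub⟩ := Part2.exists_reduced_subword M cs ν.length ν (le_refl _)
  rw [← hsb] at hτprod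
  have hτlen : τ.length = 1 := by
    have := hτred
    unfold CoxeterSystem.IsReduced at this
    rw [hτprod, cs.length_simple] at this
    omega
  obtain ⟨c, rfl⟩ := List.length_eq_one_iff.mp hτlen
  have hc : cs.simple c = cs.simple b := by
    rw [← hτprod, cs.wordProd_cons, cs.wordProd_nil, mul_one]
  have hcb : c = b := Part3.simple_injective M cs hc
  have hcν : c ∈ ν := hτsub c (List.mem_singleton_self c)
  have hcμ : c ∈ μ := by
    rw [hν] at hcν
    rcases List.mem_append.mp hcν with h1 | h1
    · exact List.mem_reverse.mp h1
    rcases List.mem_append.mp h1 with h2 | h2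
    · exact List.take_subset _ _ h2
    rcases List.mem_append.mp h2 with h3 | h3
    · rw [List.mem_singleton.mp h3]
      exact List.getElem_mem hklen
    rcases List.mem_append.mp h3 with h4 | h4
    · exact List.take_subset _ _ (List.mem_reverse.mp h4)
    · exact h4
  -- extract the index
  rw [hμ] at hcμ
  obtain ⟨pr, hpr, hprfst⟩ := List.mem_map.mp hcμ
  have hpr2 := List.mem_filter.mp hpr
  obtain ⟨i, hilt, hieq⟩ := List.mem_iff_getElem.mp hpr2.1
  have hizip : i < (ω.take (j:ℕ)).length ∧ i < (σ.take (j:ℕ)).length := by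
    rw [List.length_zip] at hilt
    omega
  have hij : i < (j:ℕ) := by
    have := hizip.1
    rw [List.length_take] at this
    omega
  have hiω : i < ω.length := lt_trans hij j.isLt
  refine ⟨⟨i, hiω⟩, hij, ?_, ?_⟩
  · -- σ.getD i false = true
    have hσlt : i < σ.length := by rw [hlen]; omega
    have hσi : (σ.take (j:ℕ))[i]'(hizip.2) = σ[i]'hσlt := List.getElem_take
    have hsnd : pr.2 = true := hpr2.2
    have h5 : (σ.take (j:ℕ))[i]'(hizip.2) = pr.2 := by
      have h6 := congrArg Prod.snd hieq
      rw [List.getElem_zip] at h6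
      exact h6
    have hσtrue : σ[i]'hσlt = true := by
      rw [← hσi, h5]
      exact hsnd
    rw [List.getD_eq_getElem _ _ hσlt]
    exact hσtrue
  · -- ω.get ⟨i, _⟩ = ω.get j
    have hωi : (ω.take (j:ℕ))[i]'(hizip.1) = ω[i]'hiω := List.getElem_take
    have h5 : (ω.take (j:ℕ))[i]'(hizip.1) = pr.1 := by
      have h6 := congrArg Prod.fst hieq
      rw [List.getElem_zip] at h6
      exact h6
    have hωc : ω[i]'hiω = c := by
      rw [← hωi, h5]
      exact hprfst
    show ω[i] = ω.get j
    rw [hωc, hcb, hbd]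

end Paper
end

section
/- Let (W,S) and (W',S') be Coxeter systems and f: S' → S an injective map with m(f(s), f(t)) = m(s,t) for all s,t ∈ S' (a Coxeter embedding). Let y' = y₁⋯y_k be a reduced expression in W'. Then f(y₁)⋯f(y_k) is a reduced expression in W, and for any mask σ ∈ {0,1}^k, position j is a defect of y₁⋯y_k with respect to σ if and only if position j is a defect of f(y₁)⋯f(y_k) with respect to σ. -/
open List

namespace Paper

variable {B W : Type*} [Group W]

section C5
open Real Finsupp CoxeterSystem
variable {B : Type*}

noncomputable def kf (M : CoxeterMatrix B) (a b : B) : ℝ := - Real.cos (π / M a b)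
lemma kf_symm (M : CoxeterMatrix B) (a b : B) : kf M a b = kf M b a := by rw [kf, kf, M.symmetric]
lemma kf_diag (M : CoxeterMatrix B) (a : B) : kf M a a = 1 := by simp [kf, M.diagonal]
noncomputable def chebR (x : ℝ) : ℕ → ℝ
  | 0 => 0
  | 1 => 1
  | (q+2) => x * chebR x (q+1) - chebR x q
noncomputable def EV (a : B) : B →₀ ℝ := Finsupp.single a 1
noncomputable def pf (M : CoxeterMatrix B) (a : B) : (B →₀ ℝ) →ₗ[ℝ] ℝ :=
  Finsupp.linearCombination ℝ (kf M a)
lemma pf_EV (M : CoxeterMatrix B) (a d : B) : pf M a (EV d) = kf M a d := by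
  simp [pf, EV, Finsupp.linearCombination_single]
noncomputable def sig (M : CoxeterMatrix B) (a : B) : Module.End ℝ (B →₀ ℝ) :=
  LinearMap.id - ((pf M a).smulRight ((2:ℝ) • EV a))
lemma sig_apply (M : CoxeterMatrix B) (a : B) (v : B →₀ ℝ) :
    sig M a v = v - (2 * pf M a v) • EV a := by
  simp [sig, LinearMap.sub_apply, LinearMap.smulRight_apply, smul_smul, mul_comm]
lemma sig_EV (M : CoxeterMatrix B) (a d : B) :
    sig M a (EV d) = EV d - (2 * kf M a d) • EV a := by
  rw [sig_apply, pf_EV]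

/-- Coefficient used in the dihedral recursions: `c2 = 2 cos (π / m)`. -/
noncomputable def cc (M : CoxeterMatrix B) (a b : B) : ℝ := -(2 * kf M a b)

lemma cc_symm (M : CoxeterMatrix B) (a b : B) : cc M a b = cc M b a := by
  rw [cc, cc, kf_symm]


lemma cc_symm' (M : CoxeterMatrix B) (a b : B) : cc M a b = cc M b a := by
  rw [cc, cc, kf_symm]

lemma sig_EV' (M : CoxeterMatrix B) (a d : B) :
    sig M a (EV d) = EV d + (cc M a d) • EV a := by
  rw [sig_EV, cc, sub_eq_add_neg, neg_smul]

lemma sig_EV_self (M : CoxeterMatrix B) (a : B) : sig M a (EV a) = - EV a := by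
  rw [sig_EV, kf_diag]
  module

/-- The product of reflections along a word. -/
noncomputable def endProd (M : CoxeterMatrix B) (l : List B) : Module.End ℝ (B →₀ ℝ) :=
  (l.map (sig M)).prod

@[simp] lemma endProd_nil (M : CoxeterMatrix B) : endProd M [] = 1 := rfl

lemma endProd_cons (M : CoxeterMatrix B) (a : B) (l : List B) :
    endProd M (a :: l) = sig M a * endProd M l := by
  simp [endProd]

lemma sig_invol (M : CoxeterMatrix B) (a : B) (v : B →₀ ℝ) :
    sig M a (sig M a v) = v := by
  rw [sig_apply M a v, map_sub, map_smul, sig_EV_self, sig_apply]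
  module

/-- Left coefficient lemma: image of `EV a` under the alternating product. -/
lemma endProd_alt_left (M : CoxeterMatrix B) (a b : B) (j : ℕ) :
    endProd M (alternatingWord a b j) (EV a) =
      (if Even j then chebR (cc M a b) (j+1) else chebR (cc M a b) j) • EV a +
      (if Even j then chebR (cc M a b) j else chebR (cc M a b) (j+1)) • EV b := by
  induction j with
  | zero => simp [chebR, alternatingWord]
  | succ j ih =>
    rw [alternatingWord_succ', endProd_cons]
    by_cases hj : Even j
    · have hj1 : ¬ Even (j+1) := by simp [Nat.even_add_one, hj]
      simp only [hj, if_true, hj1, if_false, Module.End.mul_apply] at ih ⊢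
      rw [ih, map_add, map_smul, map_smul, sig_EV', sig_EV_self, cc_symm' M b a]
      rw [show chebR (cc M a b) (j+2) = (cc M a b) * chebR (cc M a b) (j+1) - chebR (cc M a b) j
        from rfl]
      module
    · have hj1 : Even (j+1) := Nat.even_add_one.mpr hj
      simp only [hj, if_false, hj1, if_true, Module.End.mul_apply] at ih ⊢
      rw [ih, map_add, map_smul, map_smul, sig_EV_self, sig_EV']
      rw [show chebR (cc M a b) (j+2) = (cc M a b) * chebR (cc M a b) (j+1) - chebR (cc M a b) j
        from rfl]
      module

/-- Right coefficient lemma: image of `EV b` under the alternating product. -/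
lemma endProd_alt_right (M : CoxeterMatrix B) (a b : B) (j : ℕ) :
    endProd M (alternatingWord a b (j+1)) (EV b) =
      (if Even j then -chebR (cc M a b) j else -chebR (cc M a b) (j+1)) • EV a +
      (if Even j then -chebR (cc M a b) (j+1) else -chebR (cc M a b) j) • EV b := by
  induction j with
  | zero =>
    rw [show alternatingWord a b 1 = [b] from rfl]
    simp only [if_true, Even.zero]
    rw [show endProd M [b] = sig M b * endProd M [] from endProd_cons M b []]
    simp [sig_EV_self, chebR]
  | succ j ih =>
    rw [alternatingWord_succ', endProd_cons]
    by_cases hj : Even j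
    · have hj1 : ¬ Even (j+1) := by simp [Nat.even_add_one, hj]
      simp only [hj, if_true, hj1, if_false, Module.End.mul_apply] at ih ⊢
      rw [ih, map_add, map_smul, map_smul, sig_EV_self, sig_EV']
      rw [show chebR (cc M a b) (j+2) = (cc M a b) * chebR (cc M a b) (j+1) - chebR (cc M a b) j
        from rfl]
      module
    · have hj1 : Even (j+1) := Nat.even_add_one.mpr hj
      simp only [hj, if_false, hj1, if_true, Module.End.mul_apply] at ih ⊢
      rw [ih, map_add, map_smul, map_smul, sig_EV', sig_EV_self, cc_symm' M b a]
      rw [show chebR (cc M a b) (j+2) = (cc M a b) * chebR (cc M a b) (j+1) - chebR (cc M a b) j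
        from rfl]
      module

variable {B : Type*}
lemma chebR_two (q : ℕ) : chebR 2 q = q := by
  induction q using Nat.twoStepInduction with
  | zero => simp [chebR]
  | one => simp [chebR]
  | more q h1 h2 => rw [chebR, h1, h2]; push_cast; ring
lemma chebR_cos (θ : ℝ) (q : ℕ) : chebR (2 * Real.cos θ) q * Real.sin θ = Real.sin (q * θ) := by
  induction q using Nat.twoStepInduction with
  | zero => simp [chebR]
  | one => simp [chebR]
  | more q h1 h2 =>
    rw [chebR, sub_mul, mul_assoc, h1, h2]
    have e1 : (((q:ℕ)+2 : ℕ) : ℝ) * θ = ((q : ℝ) + 1) * θ + θ := by push_cast; ring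
    have e2 : (q : ℝ) * θ = ((q : ℝ) + 1) * θ - θ := by ring
    rw [e1, e2, Real.sin_add, Real.sin_sub]
    push_cast
    ring

section Values
variable (M : CoxeterMatrix B) {a b : B}

lemma cc_eq_two_cos (hM : M a b ≠ 0) : cc M a b = 2 * Real.cos (π / M a b) := by
  rw [cc, kf]; ring

lemma cc_eq_two (hM : M a b = 0) : cc M a b = 2 := by
  rw [cc, kf, hM]; norm_num

lemma theta_pos (hM : M a b ≠ 0) : 0 < π / M a b :=
  div_pos Real.pi_pos (by exact_mod_cast Nat.pos_of_ne_zero hM)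

lemma theta_lt_pi (hM : 2 ≤ M a b) : π / M a b < π := by
  have h1 : (1:ℝ) < (M a b : ℝ) := by exact_mod_cast (by omega : 1 < M a b)
  exact div_lt_self Real.pi_pos h1

lemma sin_theta_pos (hM : 2 ≤ M a b) : 0 < Real.sin (π / M a b) :=
  Real.sin_pos_of_pos_of_lt_pi (theta_pos M (by omega)) (theta_lt_pi M hM)

lemma chebR_nonneg_of_le (hM : 2 ≤ M a b) {q : ℕ} (hq : q ≤ M a b) :
    0 ≤ chebR (cc M a b) q := by
  have hs := sin_theta_pos M hM
  have h := chebR_cos (π / M a b) q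
  rw [← cc_eq_two_cos M (by omega)] at h
  have hsin : 0 ≤ Real.sin (q * (π / M a b)) := by
    apply Real.sin_nonneg_of_nonneg_of_le_pi
    · positivity
    · have hm0 : (0:ℝ) < (M a b : ℝ) := by exact_mod_cast (by omega : 0 < M a b)
      have hqm : (q:ℝ) ≤ (M a b : ℝ) := by exact_mod_cast hq
      have heq : (M a b : ℝ) * (π / M a b) = π := by field_simp
      nlinarith [mul_le_mul_of_nonneg_right hqm (le_of_lt (div_pos Real.pi_pos hm0))]
  nlinarith [h]

lemma chebR_nonneg (hab : a ≠ b) {q : ℕ} (hq : M a b = 0 ∨ q ≤ M a b) :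
    0 ≤ chebR (cc M a b) q := by
  rcases hq with h0 | hle
  · rw [cc_eq_two M h0, chebR_two]; positivity
  · have : M a b ≠ 1 := M.off_diagonal a b hab
    rcases Nat.eq_zero_or_pos (M a b) with h0 | h1
    · rw [cc_eq_two M h0, chebR_two]; positivity
    · exact chebR_nonneg_of_le M (by omega) hle

lemma mul_theta (hM : M a b ≠ 0) (q : ℕ) :
    (q : ℝ) * (π / M a b) = q * π / M a b := by ring

lemma chebR_2m (hM : 2 ≤ M a b) : chebR (cc M a b) (2 * M a b) = 0 := by
  have hs := sin_theta_pos M hM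
  have h := chebR_cos (π / M a b) (2 * M a b)
  rw [← cc_eq_two_cos M (by omega)] at h
  have hm0 : (M a b : ℝ) ≠ 0 := by exact_mod_cast (by omega : M a b ≠ 0)
  have : ((2 * M a b : ℕ) : ℝ) * (π / M a b) = 2 * π := by push_cast; field_simp
  rw [this, Real.sin_two_pi] at h
  exact mul_right_cancel₀ (ne_of_gt hs) (by rw [h, zero_mul])

lemma chebR_2m1 (hM : 2 ≤ M a b) : chebR (cc M a b) (2 * M a b + 1) = 1 := by
  have hs := sin_theta_pos M hM
  have h := chebR_cos (π / M a b) (2 * M a b + 1)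
  rw [← cc_eq_two_cos M (by omega)] at h
  have hm0 : (M a b : ℝ) ≠ 0 := by exact_mod_cast (by omega : M a b ≠ 0)
  have : ((2 * M a b + 1 : ℕ) : ℝ) * (π / M a b) = 2 * π + π / M a b := by
    push_cast; field_simp
  rw [this, Real.sin_add, Real.sin_two_pi, Real.cos_two_pi] at h
  apply mul_right_cancel₀ (ne_of_gt hs)
  rw [h]; ring

lemma chebR_2m_sub1 (hM : 2 ≤ M a b) {q : ℕ} (hq : q + 1 = 2 * M a b) :
    chebR (cc M a b) q = -1 := by
  have hs := sin_theta_pos M hM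
  have h := chebR_cos (π / M a b) q
  rw [← cc_eq_two_cos M (by omega)] at h
  have hm0 : (M a b : ℝ) ≠ 0 := by exact_mod_cast (by omega : M a b ≠ 0)
  have hq' : (q : ℝ) = 2 * M a b - 1 := by
    have : (q : ℝ) + 1 = 2 * M a b := by exact_mod_cast hq
    linarith
  have : (q : ℝ) * (π / M a b) = 2 * π - π / M a b := by
    rw [hq']; field_simp
  rw [this, Real.sin_sub, Real.sin_two_pi, Real.cos_two_pi] at h
  apply mul_right_cancel₀ (ne_of_gt hs)
  rw [h]; ring

end Values

section Lift
variable (M : CoxeterMatrix B)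

lemma kf_sq_lt_one {a b : B} (hM : 2 ≤ M a b) : (kf M a b)^2 < 1 := by
  have hs := sin_theta_pos M hM
  have := Real.sin_sq_add_cos_sq (π / M a b)
  have : (Real.cos (π / M a b))^2 = 1 - (Real.sin (π / M a b))^2 := by linarith
  rw [kf, neg_pow]
  simp only [neg_neg, even_two, Even.neg_pow]
  nlinarith

lemma pow_prod_eq_endProd (a b : B) (n : ℕ) :
    (sig M a * sig M b) ^ n = endProd M (alternatingWord a b (2 * n)) := by
  induction n with
  | zero => simp [endProd, alternatingWord]
  | succ n ih =>
    have h1 : 2 * (n + 1) = (2 * n + 1) + 1 := by ring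
    rw [h1, alternatingWord_succ', alternatingWord_succ']
    have he : ¬ Even (2 * n + 1) := by simp [Nat.even_add_one, parity_simps]
    have he2 : Even (2 * n) := even_two_mul n
    rw [if_neg he, if_pos he2, endProd_cons, endProd_cons, ← ih, pow_succ', mul_assoc]

lemma endProd_alt_apply_EV (a b : B) (hab : a ≠ b) (hM : 2 ≤ M a b) (d : B) :
    endProd M (alternatingWord a b (2 * M a b)) (EV d) = EV d := by
  set m := M a b with hm
  set k := kf M a b with hk
  have hD : 1 - k^2 ≠ 0 := by have := kf_sq_lt_one M hM; rw [← hk] at this; nlinarith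
  set α : ℝ := (kf M a d - k * kf M b d)/(1 - k^2) with hα
  set β : ℝ := (kf M b d - k * kf M a d)/(1 - k^2) with hβ
  set r : (B →₀ ℝ) := EV d - α • EV a - β • EV b with hr
  have hpa : pf M a r = 0 := by
    rw [hr, map_sub, map_sub, map_smul, map_smul, pf_EV, pf_EV, pf_EV, kf_diag,
      smul_eq_mul, smul_eq_mul, ← hk, hα, hβ]
    field_simp
    ring
  have hpb : pf M b r = 0 := by
    rw [hr, map_sub, map_sub, map_smul, map_smul, pf_EV, pf_EV, pf_EV, kf_diag,
      smul_eq_mul, smul_eq_mul, kf_symm M b a, ← hk, hα, hβ]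
    field_simp
    ring
  have hra : sig M a r = r := by rw [sig_apply, hpa]; simp
  have hrb : sig M b r = r := by rw [sig_apply, hpb]; simp
  have hpow : ∀ n : ℕ, ((sig M a * sig M b) ^ n) r = r := by
    intro n
    induction n with
    | zero => simp
    | succ n ih =>
      rw [pow_succ', Module.End.mul_apply, Module.End.mul_apply, ih, hrb, hra]
  have hEa : endProd M (alternatingWord a b (2 * m)) (EV a) = EV a := by
    rw [endProd_alt_left M a b (2 * m), if_pos (even_two_mul m),
      show 2 * m + 1 = 2 * M a b + 1 from rfl, chebR_2m1 M hM, chebR_2m M hM]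
    simp
  have hEb : endProd M (alternatingWord a b (2 * m)) (EV b) = EV b := by
    have h1 : (2 * m - 1) + 1 = 2 * m := by omega
    have h2 : ¬ Even (2 * m - 1) := by
      rw [Nat.even_iff]
      omega
    have := endProd_alt_right M a b (2 * m - 1)
    rw [h1, if_neg h2, if_neg h2] at this
    rw [this, chebR_2m M hM, chebR_2m_sub1 M hM h1]
    simp
  have hdecomp : EV d = r + α • EV a + β • EV b := by rw [hr]; abel
  rw [← pow_prod_eq_endProd, hdecomp, map_add, map_add, map_smul, map_smul, hpow,
    pow_prod_eq_endProd, hEa, hEb]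

lemma isLiftable_sig : CoxeterMatrix.IsLiftable M (sig M) := by
  intro a b
  by_cases hab : a = b
  · subst hab
    rw [M.diagonal, pow_one]
    exact LinearMap.ext fun v => sig_invol M a v
  · rcases Nat.eq_zero_or_pos (M a b) with h0 | h1
    · rw [h0, pow_zero]
    · have hne1 : M a b ≠ 1 := M.off_diagonal a b hab
      have hM : 2 ≤ M a b := by omega
      rw [pow_prod_eq_endProd]
      apply Finsupp.lhom_ext
      intro d x
      have : (Finsupp.single d x : B →₀ ℝ) = x • EV d := by
        rw [EV, Finsupp.smul_single, smul_eq_mul, mul_one]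
      rw [this, map_smul, endProd_alt_apply_EV M a b hab hM d, Module.End.one_apply]


end Lift

section Rep
variable {B W : Type*} [Group W] {M : CoxeterMatrix B} (cs : CoxeterSystem M W)

/-- The geometric representation of the Coxeter system. -/
noncomputable def rho : W →* Module.End ℝ (B →₀ ℝ) := cs.lift ⟨sig M, isLiftable_sig M⟩

@[simp] lemma rho_simple (a : B) : rho cs (cs.simple a) = sig M a :=
  cs.lift_apply_simple (isLiftable_sig M) a

lemma rho_wordProd (l : List B) : rho cs (cs.wordProd l) = endProd M l := by
  induction l with
  | nil => rw [wordProd_nil, map_one]; rfl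
  | cons a l ih => rw [wordProd_cons, map_mul, rho_simple, endProd_cons, ih]

lemma EV_nonneg (a : B) : 0 ≤ EV a := by
  rw [EV, Finsupp.single_nonneg]
  norm_num

lemma comb_nonneg {x y : ℝ} {u v : B →₀ ℝ} (hx : 0 ≤ x) (hy : 0 ≤ y)
    (hu : 0 ≤ u) (hv : 0 ≤ v) : 0 ≤ x • u + y • v := by
  rw [Finsupp.le_def] at hu hv ⊢
  intro b
  have h1 := hu b
  have h2 := hv b
  simp only [Finsupp.coe_zero, Pi.zero_apply] at h1 h2 ⊢
  rw [Finsupp.add_apply, Finsupp.smul_apply, Finsupp.smul_apply, smul_eq_mul, smul_eq_mul]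
  nlinarith

/-- Key theorem: if `w * sᵢ` is longer than `w`, then `ρ(w) eᵢ ≥ 0`. -/
theorem rho_nonneg_of_ascent (w : W) (i : B)
    (h : cs.length w < cs.length (w * cs.simple i)) : 0 ≤ rho cs w (EV i) := by
  suffices H : ∀ (n : ℕ) (w : W) (i : B), cs.length w = n →
      cs.length w < cs.length (w * cs.simple i) → 0 ≤ rho cs w (EV i) from
    H (cs.length w) w i rfl h
  intro n
  induction n using Nat.strong_induction_on with
  | _ n mih =>
  intro w i hw h
  rcases Nat.eq_zero_or_pos n with hn0 | hn1
  · have hw1 : w = 1 := cs.length_eq_zero_iff.mp (by rw [hw, hn0])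
    rw [hw1, map_one, Module.End.one_apply]
    exact EV_nonneg i
  · have hwne : w ≠ 1 := by
      intro h1
      rw [h1, cs.length_one] at hw
      omega
    obtain ⟨t, ht⟩ := cs.exists_rightDescent_of_ne_one hwne
    have hti : t ≠ i := by
      intro h1
      subst h1
      exact absurd ht (by unfold CoxeterSystem.IsRightDescent; omega)
    have hit : i ≠ t := Ne.symm hti
    have chain : ∀ (d j : ℕ), 1 ≤ j → (M i t = 0 ∨ j ≤ M i t) →
        cs.length (w * (cs.wordProd (alternatingWord i t j))⁻¹) + j = n →
        cs.length (w * (cs.wordProd (alternatingWord i t j))⁻¹ *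
          cs.simple (if Even j then i else t)) + j = n + 1 →
        n ≤ d + j → 0 ≤ rho cs w (EV i) := by
      intro d
      induction d using Nat.strong_induction_on with
      | _ d dih =>
      intro j hj1 hjm hlen hback hfuel
      set wj := w * (cs.wordProd (alternatingWord i t j))⁻¹ with hwj
      have hwfact : w = wj * cs.wordProd (alternatingWord i t j) := by
        rw [hwj, inv_mul_cancel_right]
      by_cases hbraid : M i t ≠ 0 ∧ j = M i t
      · exfalso
        obtain ⟨hM0, hjeq⟩ := hbraid
        have hb : cs.wordProd (alternatingWord i t (M i t)) =
            cs.wordProd (alternatingWord t i (M i t)) := by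
          have hbr := cs.wordProd_braidWord_eq i t
          rwa [braidWord, braidWord, M.symmetric t i] at hbr
        have hsplit : alternatingWord t i (M i t) =
            (alternatingWord i t (M i t - 1)).concat i := by
          have : M i t = (M i t - 1) + 1 := by omega
          rw [this]
          exact alternatingWord_succ t i (M i t - 1)
        have hws : w * cs.simple i = wj * cs.wordProd (alternatingWord i t (M i t - 1)) := by
          rw [hwfact, hjeq, hb, hsplit, wordProd_concat]
          simp only [mul_assoc, cs.simple_mul_simple_self, mul_one]
        have hle1 : cs.length (w * cs.simple i) ≤
            cs.length wj + cs.length (cs.wordProd (alternatingWord i t (M i t - 1))) := by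
          rw [hws]; exact cs.length_mul_le _ _
        have hle2 : cs.length (cs.wordProd (alternatingWord i t (M i t - 1))) ≤ M i t - 1 := by
          have := cs.length_wordProd_le (alternatingWord i t (M i t - 1))
          rwa [length_alternatingWord] at this
        have hMj : 1 ≤ M i t := by omega
        omega
      · have hjm2 : M i t = 0 ∨ j + 1 ≤ M i t := by
          rcases hjm with h0 | hle
          · exact Or.inl h0
          · rcases Nat.eq_zero_or_pos (M i t) with h0 | hpos
            · exact Or.inl h0
            · right
              rcases Nat.lt_or_ge j (M i t) with hlt | hge
              · omega
              · exfalso; exact hbraid ⟨by omega, by omega⟩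
        set x := if Even j then t else i with hx
        set y := if Even j then i else t with hy
        have hwj1 : w * (cs.wordProd (alternatingWord i t (j+1)))⁻¹ = wj * cs.simple x := by
          rw [alternatingWord_succ' i t j, wordProd_cons, mul_inv_rev, cs.inv_simple,
            ← mul_assoc, ← hwj, hx]
        rcases cs.length_mul_simple wj x with hasc | hdesc
        · -- both-ascent case: conclude via the main induction hypothesis
          have hxasc : cs.length wj < cs.length (wj * cs.simple x) := by omega
          have hyasc : cs.length wj < cs.length (wj * cs.simple y) := by omega
          have hli : cs.length wj < n := by omega
          have hboth : cs.length wj < cs.length (wj * cs.simple i) ∧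
              cs.length wj < cs.length (wj * cs.simple t) := by
            by_cases hEv : Even j
            · rw [hx, if_pos hEv] at hxasc
              rw [hy, if_pos hEv] at hyasc
              exact ⟨hyasc, hxasc⟩
            · rw [hx, if_neg hEv] at hxasc
              rw [hy, if_neg hEv] at hyasc
              exact ⟨hxasc, hyasc⟩
          have h1 : 0 ≤ rho cs wj (EV i) := mih (cs.length wj) hli wj i rfl hboth.1
          have h2 : 0 ≤ rho cs wj (EV t) := mih (cs.length wj) hli wj t rfl hboth.2
          have hXn : 0 ≤ chebR (cc M i t) j := chebR_nonneg M hit (by tauto)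
          have hYn : 0 ≤ chebR (cc M i t) (j+1) := chebR_nonneg M hit hjm2
          rw [hwfact, map_mul, Module.End.mul_apply, rho_wordProd,
            endProd_alt_left M i t j, map_add, map_smul, map_smul]
          by_cases hEv : Even j
          · rw [if_pos hEv, if_pos hEv]
            exact comb_nonneg hYn hXn h1 h2
          · rw [if_neg hEv, if_neg hEv]
            exact comb_nonneg hXn hYn h1 h2
        · -- descent: continue the chain
          have hd1 : 1 ≤ d := by omega
          have hstep : cs.length (wj * cs.simple x) + 1 = cs.length wj := hdesc
          apply dih (d-1) (by omega) (j+1) (by omega) hjm2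
          · rw [hwj1]; omega
          · have hy' : (if Even (j+1) then i else t) = x := by
              by_cases hEv : Even j
              · have : ¬ Even (j+1) := by simp [Nat.even_add_one, hEv]
                rw [if_neg this, hx, if_pos hEv]
              · have : Even (j+1) := Nat.even_add_one.mpr hEv
                rw [if_pos this, hx, if_neg hEv]
            rw [hwj1, hy', mul_assoc, cs.simple_mul_simple_self, mul_one]
            omega
          · omega
    -- kick off the chain at j = 1
    have halt1 : alternatingWord i t 1 = [t] := rfl
    have hlen1 : cs.length (w * (cs.wordProd (alternatingWord i t 1))⁻¹) + 1 = n := by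
      rw [halt1, wordProd_singleton, cs.inv_simple]
      have hdes : cs.length (w * cs.simple t) < cs.length w := ht
      rcases cs.length_mul_simple w t with h1 | h1 <;> omega
    have hback1 : cs.length (w * (cs.wordProd (alternatingWord i t 1))⁻¹ *
        cs.simple (if Even 1 then i else t)) + 1 = n + 1 := by
      have : ¬ Even 1 := by decide
      rw [halt1, wordProd_singleton, cs.inv_simple, if_neg this, mul_assoc,
        cs.simple_mul_simple_self, mul_one]
      omega
    exact chain n 1 le_rfl (by omega) hlen1 hback1 (by omega)

end Rep

section Crit
variable {B W : Type*} [Group W] {M : CoxeterMatrix B} (cs : CoxeterSystem M W)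

lemma rho_EV_ne_zero (w : W) (i : B) : rho cs w (EV i) ≠ 0 := by
  intro h0
  have h1 : rho cs w⁻¹ (rho cs w (EV i)) = EV i := by
    rw [← Module.End.mul_apply, ← map_mul, inv_mul_cancel, map_one, Module.End.one_apply]
  rw [h0, map_zero] at h1
  have := Finsupp.single_eq_zero.mp h1.symm
  norm_num at this

lemma descent_iff_rho (w : W) (i : B) :
    cs.length (w * cs.simple i) < cs.length w ↔ ¬ (0 ≤ rho cs w (EV i)) := by
  constructor
  · intro hdes hpos
    have hasc : cs.length (w * cs.simple i) <
        cs.length (w * cs.simple i * cs.simple i) := by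
      rw [cs.simple_mul_simple_cancel_right]
      exact hdes
    have h2 := rho_nonneg_of_ascent cs (w * cs.simple i) i hasc
    rw [map_mul, Module.End.mul_apply, rho_simple, sig_EV_self, map_neg] at h2
    have h3 : rho cs w (EV i) = 0 :=
      le_antisymm (by rwa [← neg_nonneg]) hpos
    exact rho_EV_ne_zero cs w i h3
  · intro hneg
    by_contra hnd
    have hne := cs.length_mul_simple_ne w i
    exact hneg (rho_nonneg_of_ascent cs w i (by omega))

end Crit

section Embed
variable {B B' W W' : Type*} [Group W] [Group W']
variable (M : CoxeterMatrix B) (cs : CoxeterSystem M W)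
variable (M' : CoxeterMatrix B') (cs' : CoxeterSystem M' W')
variable (f : B' → B)

/-- The group homomorphism induced by a Coxeter embedding. -/
noncomputable def phi (hm : ∀ a b : B', M (f a) (f b) = M' a b) : W' →* W :=
  cs'.lift ⟨fun j => cs.simple (f j), fun a b => by
    rw [← hm a b]; exact cs.simple_mul_simple_pow _ _⟩

variable (hm : ∀ a b : B', M (f a) (f b) = M' a b)

include hm in
lemma phi_simple (a : B') : phi M cs M' cs' f hm (cs'.simple a) = cs.simple (f a) :=
  cs'.lift_apply_simple _ a

lemma phi_wordProd (l : List B') :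
    phi M cs M' cs' f hm (cs'.wordProd l) = cs.wordProd (l.map f) := by
  induction l with
  | nil => simp
  | cons a l ih =>
    rw [wordProd_cons, map_mul, phi_simple, List.map_cons, wordProd_cons, ih]

/-- The linear inclusion of the geometric representations. -/
noncomputable def iot : (B' →₀ ℝ) →ₗ[ℝ] (B →₀ ℝ) := Finsupp.lmapDomain ℝ ℝ f

lemma iot_EV (a : B') : iot f (EV a) = EV (f a) := by
  simp [iot, EV, Finsupp.mapDomain_single]

lemma kf_map (hm : ∀ a b : B', M (f a) (f b) = M' a b) (a d : B') : kf M (f a) (f d) = kf M' a d := by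
  rw [kf, kf, hm]

include hm in
lemma iot_sig (a : B') (v : B' →₀ ℝ) :
    sig M (f a) (iot f v) = iot f (sig M' a v) := by
  have hext : (sig M (f a)) ∘ₗ (iot f) = (iot f) ∘ₗ (sig M' a) := by
    apply Finsupp.lhom_ext
    intro d x
    have hsingle : (Finsupp.single d x : B' →₀ ℝ) = x • EV d := by
      rw [EV, Finsupp.smul_single, smul_eq_mul, mul_one]
    rw [LinearMap.comp_apply, LinearMap.comp_apply, hsingle, map_smul, map_smul, map_smul,
      iot_EV, sig_EV, sig_EV, kf_map M M' f hm]
    simp [map_sub, map_smul, iot_EV]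
  calc sig M (f a) (iot f v) = ((sig M (f a)) ∘ₗ (iot f)) v := rfl
  _ = ((iot f) ∘ₗ (sig M' a)) v := by rw [hext]
  _ = iot f (sig M' a v) := rfl

lemma iot_rho (x : W') : ∀ (v : B' →₀ ℝ),
    rho cs (phi M cs M' cs' f hm x) (iot f v) = iot f (rho cs' x v) := by
  induction x using cs'.simple_induction with
  | simple a =>
    intro v
    rw [phi_simple M cs M' cs' f hm, rho_simple, rho_simple]
    exact iot_sig M M' f hm a v
  | one => intro v; simp
  | mul u w hu hw =>
    intro v
    rw [map_mul, map_mul, map_mul]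
    simp only [Module.End.mul_apply]
    rw [hw v, hu (rho cs' w v)]

lemma iot_apply_eq_embDomain (hinj : Function.Injective f) (v : B' →₀ ℝ) :
    iot f v = Finsupp.embDomain ⟨f, hinj⟩ v := by
  rw [Finsupp.embDomain_eq_mapDomain]
  rfl

lemma iot_nonneg_iff (hinj : Function.Injective f) (v : B' →₀ ℝ) :
    0 ≤ iot f v ↔ 0 ≤ v := by
  rw [iot_apply_eq_embDomain f hinj]
  constructor
  · intro h
    rw [Finsupp.le_def]
    intro a
    have h1 := Finsupp.le_def.mp h (f a)
    have h2 : (Finsupp.embDomain ⟨f, hinj⟩ v) (f a) = v a :=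
      Finsupp.embDomain_apply_self ⟨f, hinj⟩ v a
    rw [Finsupp.coe_zero, Pi.zero_apply, h2] at h1
    exact h1
  · intro h
    rw [Finsupp.le_def]
    intro b
    rw [Finsupp.coe_zero, Pi.zero_apply]
    by_cases hb : b ∈ Set.range f
    · obtain ⟨a, rfl⟩ := hb
      have h2 : (Finsupp.embDomain ⟨f, hinj⟩ v) (f a) = v a :=
        Finsupp.embDomain_apply_self ⟨f, hinj⟩ v a
      rw [h2]
      exact Finsupp.le_def.mp h a
    · rw [Finsupp.embDomain_notin_range _ _ _ hb]

include hm in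
lemma descent_transfer (hinj : Function.Injective f) (x : W') (a : B') :
    cs.length (phi M cs M' cs' f hm x * cs.simple (f a)) <
      cs.length (phi M cs M' cs' f hm x) ↔
    cs'.length (x * cs'.simple a) < cs'.length x := by
  rw [descent_iff_rho cs, descent_iff_rho cs']
  apply not_congr
  have h1 : rho cs (phi M cs M' cs' f hm x) (EV (f a)) = iot f (rho cs' x (EV a)) := by
    rw [← iot_EV, iot_rho M cs M' cs' f hm]
  rw [h1, iot_nonneg_iff f hinj]

include hm in
lemma length_phi (hinj : Function.Injective f) (x : W') :
    cs.length (phi M cs M' cs' f hm x) = cs'.length x := by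
  suffices H : ∀ (n : ℕ) (x : W'), cs'.length x = n →
      cs.length (phi M cs M' cs' f hm x) = cs'.length x from H (cs'.length x) x rfl
  intro n
  induction n using Nat.strong_induction_on with
  | _ n ih =>
  intro x hx
  rcases Nat.eq_zero_or_pos n with hn0 | hn1
  · have hx1 : x = 1 := cs'.length_eq_zero_iff.mp (by omega)
    rw [hx1, map_one, cs.length_one, cs'.length_one]
  · have hxne : x ≠ 1 := by
      intro h1
      rw [h1, cs'.length_one] at hx
      omega
    obtain ⟨a, ha⟩ := cs'.exists_rightDescent_of_ne_one hxne
    have ha' : cs'.length (x * cs'.simple a) < cs'.length x := ha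
    have h2 : cs'.length (x * cs'.simple a) + 1 = cs'.length x := by
      rcases cs'.length_mul_simple x a with h | h <;> omega
    have h3 := (descent_transfer M cs M' cs' f hm hinj x a).mpr ha'
    have h4 : cs.length (phi M cs M' cs' f hm x * cs.simple (f a)) + 1 =
        cs.length (phi M cs M' cs' f hm x) := by
      rcases cs.length_mul_simple (phi M cs M' cs' f hm x) (f a) with h | h <;> omega
    have h5 : phi M cs M' cs' f hm (x * cs'.simple a) =
        phi M cs M' cs' f hm x * cs.simple (f a) := by
      rw [map_mul, phi_simple M cs M' cs' f hm]
    have h6 := ih (cs'.length (x * cs'.simple a)) (by omega) (x * cs'.simple a) rfl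
    rw [h5] at h6
    omega

include hm in
lemma isReduced_map (hinj : Function.Injective f) (l : List B') (hred : cs'.IsReduced l) :
    cs.IsReduced (l.map f) := by
  unfold CoxeterSystem.IsReduced at hred ⊢
  rw [← phi_wordProd M cs M' cs' f hm, length_phi M cs M' cs' f hm hinj, List.length_map]
  exact hred

end Embed
section FinalAux
variable {α β : Type*}

lemma maskWord_map (f : α → β) (ω : List α) : ∀ (σ : List Bool),
    (((ω.map f).zip σ).filter (fun p => p.2)).map (fun p => p.1) =
      ((((ω.zip σ).filter (fun p => p.2)).map (fun p => p.1)).map f) := by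
  induction ω with
  | nil => intro σ; simp
  | cons a ω ih =>
    intro σ
    cases σ with
    | nil => simp
    | cons b σ =>
      cases b <;> simp [ih σ]

end FinalAux

end C5

/-- A Coxeter embedding `f` sends reduced expressions to reduced expressions
and preserves the defect status of every position with respect to every mask. -/
theorem coxeterEmbedding_isReduced_and_defect_iff {B B' W W' : Type*} [Group W] [Group W']
    (M : CoxeterMatrix B) (cs : CoxeterSystem M W)
    (M' : CoxeterMatrix B') (cs' : CoxeterSystem M' W')
    (f : B' → B) (hinj : Function.Injective f)
    (hm : ∀ s t : B', M (f s) (f t) = M' s t)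
    (ω : List B') (hred : cs'.IsReduced ω) :
    cs.IsReduced (ω.map f) ∧
    ∀ (σ : List Bool) (j : Fin ω.length),
      IsDefect M' cs' ω σ j ↔
        IsDefect M cs (ω.map f) σ ⟨(j : ℕ), by simp⟩ := by
  constructor
  · exact isReduced_map M cs M' cs' f hm hinj ω hred
  · intro σ j
    have htake : (ω.map f).take (j : ℕ) = (ω.take (j : ℕ)).map f := by
      rw [List.map_take]
    have hmask : maskProdTake M cs (ω.map f) σ (j : ℕ) =
        phi M cs M' cs' f hm (maskProdTake M' cs' ω σ (j : ℕ)) := by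
      unfold maskProdTake maskProd
      rw [htake, maskWord_map f (ω.take (j : ℕ)) (σ.take (j : ℕ)),
        ← phi_wordProd M cs M' cs' f hm]
    have hget : (ω.map f).get ⟨(j : ℕ), by simp⟩ = f (ω.get j) := by
      simp [List.get_eq_getElem]
    unfold IsDefect
    rw [hmask, hget]
    exact (descent_transfer M cs M' cs' f hm hinj _ _).symm

end Paper
end

section
/- A permutation w ∈ S_n is fully commutative (equivalently, short braid avoiding) if and only if its 1-line notation avoids the pattern 321, i.e., there are no indices i < j < k with w(i) > w(j) > w(k). -/
set_option maxHeartbeats 1000000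


namespace Paper

/-- The adjacent transposition `sᵢ = (i, i+1)` (zero-based index `i : Fin (n-1)`
represents the Coxeter generator `s_{i+1}`). -/
def aGen (n : ℕ) (i : Fin (n - 1)) : Equiv.Perm (Fin n) :=
  Equiv.swap ⟨i.1, by have := i.isLt; omega⟩ ⟨i.1 + 1, by have := i.isLt; omega⟩

/-- The product of a word in the adjacent transpositions. -/
def aProd (n : ℕ) (l : List (Fin (n - 1))) : Equiv.Perm (Fin n) :=
  (l.map (aGen n)).prod

/-- `l` is a reduced word for the permutation `w`. -/
def IsReducedWordA (n : ℕ) (l : List (Fin (n - 1))) (w : Equiv.Perm (Fin n)) : Prop :=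
  aProd n l = w ∧ ∀ l' : List (Fin (n - 1)), aProd n l' = w → l.length ≤ l'.length

/-- `w` is fully commutative (equivalently, short braid avoiding): no reduced word for `w`
contains a consecutive factor `sᵢ s_j sᵢ` with `s_i, s_j` adjacent (non-commuting). -/
def FullyCommutativeA (n : ℕ) (w : Equiv.Perm (Fin n)) : Prop :=
  ∀ l : List (Fin (n - 1)), IsReducedWordA n l w →
    ∀ (pre suf : List (Fin (n - 1))) (i j : Fin (n - 1)),
      l = pre ++ [i, j, i] ++ suf → ¬ ((i : ℕ) + 1 = (j : ℕ) ∨ (j : ℕ) + 1 = (i : ℕ))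

/-- `w` avoids the 1-line pattern `321`. -/
def Avoids321 (n : ℕ) (w : Equiv.Perm (Fin n)) : Prop :=
  ¬ ∃ i j k : Fin n, i < j ∧ j < k ∧ w k < w j ∧ w j < w i


section FCProof

variable {n : ℕ}


def fA (i : Fin (n-1)) : Fin n := ⟨i.1, by have := i.isLt; omega⟩
def fB (i : Fin (n-1)) : Fin n := ⟨i.1+1, by have := i.isLt; omega⟩

lemma aGen_eq (i : Fin (n-1)) : aGen n i = Equiv.swap (fA i) (fB i) := rfl

lemma fA_lt_fB (i : Fin (n-1)) : fA i < fB i := by simp [fA, fB, Fin.lt_def]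

lemma aGen_mul_self (i : Fin (n-1)) : aGen n i * aGen n i = 1 := Equiv.swap_mul_self _ _

lemma aProd_nil : aProd n [] = 1 := rfl

lemma aProd_append (l1 l2 : List (Fin (n-1))) :
    aProd n (l1 ++ l2) = aProd n l1 * aProd n l2 := by
  simp [aProd]

lemma aProd_singleton (i : Fin (n-1)) : aProd n [i] = aGen n i := by simp [aProd]

lemma aProd_reverse (l : List (Fin (n-1))) : aProd n l.reverse = (aProd n l)⁻¹ := by
  induction l with
  | nil => simp [aProd]
  | cons a l ih =>
      have : (a :: l) = [a] ++ l := rfl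
      rw [this, List.reverse_append, aProd_append, aProd_append, ih]
      simp [aProd, mul_inv_rev]
      rw [aGen_eq]
      exact (Equiv.swap_inv _ _).symm

/-- adjacent swap preserves order of a pair unless the pair is exactly (i, i+1). -/
lemma swap_pair_lt (i : Fin (n-1)) {x y : Fin n} (hxy : x < y)
    (hne : ¬((x:ℕ) = (i:ℕ) ∧ (y:ℕ) = (i:ℕ)+1)) :
    aGen n i x < aGen n i y := by
  rw [aGen_eq]
  rcases i with ⟨i, hi⟩; rcases x with ⟨x, hx⟩; rcases y with ⟨y, hy⟩
  simp only [Equiv.swap_apply_def, fA, fB, Fin.ext_iff, Fin.lt_def, Fin.mk_lt_mk,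
    Fin.val_mk, Fin.mk.injEq] at *
  split_ifs <;> simp only [Fin.lt_def] <;> omega

def invSet (w : Equiv.Perm (Fin n)) : Finset (Fin n × Fin n) :=
  Finset.univ.filter (fun q => q.1 < q.2 ∧ w q.2 < w q.1)

def invNum (w : Equiv.Perm (Fin n)) : ℕ := (invSet w).card

lemma mem_invSet {w : Equiv.Perm (Fin n)} {q : Fin n × Fin n} :
    q ∈ invSet w ↔ q.1 < q.2 ∧ w q.2 < w q.1 := by
  simp [invSet]

lemma invNum_one : invNum (1 : Equiv.Perm (Fin n)) = 0 := by
  simp only [invNum, Finset.card_eq_zero, invSet]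
  ext q
  simp only [Finset.mem_filter, Finset.mem_univ, true_and, Finset.notMem_empty, iff_false]
  rintro ⟨h1, h2⟩
  simp at h2
  exact absurd (h2.trans h1) (lt_irrefl _)

lemma mul_aGen_apply (w : Equiv.Perm (Fin n)) (i : Fin (n-1)) (x : Fin n) :
    (w * aGen n i) x = w (aGen n i x) := rfl

/-- L1 -/
lemma invNum_mul_aGen_lt (w : Equiv.Perm (Fin n)) (i : Fin (n-1))
    (h : w (fA i) < w (fB i)) :
    invNum (w * aGen n i) = invNum w + 1 := by
  classical
  set s := aGen n i with hs
  have hsAB : s (fA i) = fB i := Equiv.swap_apply_left _ _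
  have hsBA : s (fB i) = fA i := Equiv.swap_apply_right _ _
  have hss : ∀ x, s (s x) = x := fun x => Equiv.swap_apply_self _ _ _
  set G : Fin n × Fin n → Fin n × Fin n := fun q => (s q.1, s q.2) with hG
  have hGinj : Function.Injective G := by
    intro a b hab
    simp only [hG, Prod.mk.injEq] at hab
    exact Prod.ext (s.injective hab.1) (s.injective hab.2)
  have hABmem : (fA i, fB i) ∈ invSet (w * s) := by
    rw [mem_invSet]
    refine ⟨fA_lt_fB i, ?_⟩
    show (w * s) (fB i) < (w * s) (fA i)
    rw [Equiv.Perm.mul_apply, Equiv.Perm.mul_apply, hsAB, hsBA]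
    exact h
  have hABnot : (fA i, fB i) ∉ (invSet w).image G := by
    intro hmem
    rcases Finset.mem_image.mp hmem with ⟨q, hq, hGq⟩
    rw [mem_invSet] at hq
    have h1 : s q.1 = fA i := congrArg Prod.fst hGq
    have h2 : s q.2 = fB i := congrArg Prod.snd hGq
    have hq1 : q.1 = fB i := by rw [← hss q.1, h1, hsAB]
    have hq2 : q.2 = fA i := by rw [← hss q.2, h2, hsBA]
    rw [hq1, hq2] at hq
    exact absurd (hq.1.trans (fA_lt_fB i)) (lt_irrefl _)
  have hset : invSet (w * s) = insert (fA i, fB i) ((invSet w).image G) := by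
    ext q
    constructor
    · intro hq
      rw [mem_invSet] at hq
      by_cases hAB : q = (fA i, fB i)
      · rw [hAB]; exact Finset.mem_insert_self _ _
      · refine Finset.mem_insert_of_mem (Finset.mem_image.mpr ⟨G q, ?_, ?_⟩)
        · rw [mem_invSet]
          constructor
          · refine swap_pair_lt i hq.1 ?_
            intro ⟨hx, hy⟩
            exact hAB (Prod.ext (Fin.ext hx) (Fin.ext hy))
          · show (w : Equiv.Perm (Fin n)) (s q.2) < w (s q.1)
            exact hq.2
        · simp only [hG, hss]
    · intro hq
      rcases Finset.mem_insert.mp hq with hq | hq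
      · rw [hq]; exact hABmem
      · rcases Finset.mem_image.mp hq with ⟨r, hr, hGr⟩
        rw [mem_invSet] at hr
        have hrne : ¬((r.1:ℕ) = (i:ℕ) ∧ (r.2:ℕ) = (i:ℕ)+1) := by
          intro ⟨h1, h2⟩
          have : r = (fA i, fB i) := Prod.ext (Fin.ext h1) (Fin.ext h2)
          rw [this] at hr
          exact absurd hr.2 (not_lt.mpr (le_of_lt h))
        rw [← hGr, mem_invSet]
        refine ⟨swap_pair_lt i hr.1 hrne, ?_⟩
        show (w : Equiv.Perm (Fin n)) (s (s r.2)) < w (s (s r.1))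
        rw [hss, hss]
        exact hr.2
  rw [invNum, hset, Finset.card_insert_of_notMem hABnot,
    Finset.card_image_of_injective _ hGinj]
  rfl

/-- L2 -/
lemma invNum_mul_aGen_gt (w : Equiv.Perm (Fin n)) (i : Fin (n-1))
    (h : w (fB i) < w (fA i)) :
    invNum w = invNum (w * aGen n i) + 1 := by
  have h' : (w * aGen n i) (fA i) < (w * aGen n i) (fB i) := by
    rw [Equiv.Perm.mul_apply, Equiv.Perm.mul_apply, aGen_eq,
      Equiv.swap_apply_left, Equiv.swap_apply_right]
    exact h
  have := invNum_mul_aGen_lt (w * aGen n i) i h'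
  rw [mul_assoc, aGen_mul_self, mul_one] at this
  omega

lemma apply_fA_ne_fB (w : Equiv.Perm (Fin n)) (i : Fin (n-1)) : w (fA i) ≠ w (fB i) := by
  intro hc
  have := w.injective hc
  exact absurd this (ne_of_lt (fA_lt_fB i))

lemma invNum_aProd_le (l : List (Fin (n-1))) : invNum (aProd n l) ≤ l.length := by
  induction l using List.reverseRecOn with
  | nil => simp [aProd_nil, invNum_one]
  | append_singleton l i ih =>
      rw [aProd_append, aProd_singleton, List.length_append]
      rcases lt_or_gt_of_ne (apply_fA_ne_fB (aProd n l) i) with h | h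
      · rw [invNum_mul_aGen_lt _ _ h]; simpa using ih
      · have := invNum_mul_aGen_gt _ i h
        simp only [List.length_singleton]
        omega

lemma eq_one_of_invNum_zero {w : Equiv.Perm (Fin n)} (h : invNum w = 0) : w = 1 := by
  have hmono : StrictMono w := by
    intro x y hxy
    rcases lt_trichotomy (w x) (w y) with h' | h' | h'
    · exact h'
    · exact absurd (w.injective h') (ne_of_lt hxy)
    · exfalso
      have : (x, y) ∈ invSet w := mem_invSet.mpr ⟨hxy, h'⟩
      rw [invNum, Finset.card_eq_zero] at h
      rw [h] at this
      exact absurd this (Finset.notMem_empty _)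
  have hid : StrictMono (id : Fin n → Fin n) := strictMono_id
  have hrange : Set.range w = Set.range (id : Fin n → Fin n) := by
    rw [Set.range_id]
    exact Set.range_eq_univ.mpr w.surjective
  haveI : WellFoundedLT (Fin n) := inferInstance
  have := (StrictMono.range_inj (β := Fin n) (γ := Fin n) hmono hid).1 hrange
  ext x
  have hx := congrFun this x
  simp only [id] at hx
  simp [hx]

lemma exists_descent_aux (w : Equiv.Perm (Fin n)) :
    ∀ d : ℕ, ∀ x y : Fin n, (y:ℕ) = (x:ℕ) + d + 1 → w y < w x →
    ∃ i : Fin (n-1), (x:ℕ) ≤ (i:ℕ) ∧ (i:ℕ)+1 ≤ (y:ℕ) ∧ w (fB i) < w (fA i) := by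
  intro d
  induction d with
  | zero =>
      intro x y hy hw
      have hyn := y.isLt
      refine ⟨⟨(x:ℕ), by omega⟩, le_refl _, by simp; omega, ?_⟩
      have hA : fA (⟨(x:ℕ), by omega⟩ : Fin (n-1)) = x := Fin.ext rfl
      have hB : fB (⟨(x:ℕ), by omega⟩ : Fin (n-1)) = y := Fin.ext (by simp [fB]; omega)
      rw [hA, hB]; exact hw
  | succ d ih =>
      intro x y hy hw
      have hyn := y.isLt
      set m : Fin n := ⟨(x:ℕ)+1, by omega⟩ with hm
      have hxm : x ≠ m := by
        intro hc; have := congrArg Fin.val hc; simp [hm] at this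
      rcases lt_or_gt_of_ne (fun hc => hxm (w.injective hc) : w x ≠ w m) with h | h
      · -- w x < w m, so w y < w m, recurse on (m, y)
        obtain ⟨i, h1, h2, h3⟩ := ih m y (by simp [hm]; omega) (hw.trans h)
        exact ⟨i, by simp [hm] at h1; omega, h2, h3⟩
      · -- descent at (x, x+1)
        refine ⟨⟨(x:ℕ), by omega⟩, le_refl _, by simp; omega, ?_⟩
        have hA : fA (⟨(x:ℕ), by omega⟩ : Fin (n-1)) = x := Fin.ext rfl
        have hB : fB (⟨(x:ℕ), by omega⟩ : Fin (n-1)) = m := Fin.ext rfl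
        rw [hA, hB]; exact h

lemma exists_descent {w : Equiv.Perm (Fin n)} {x y : Fin n} (hxy : x < y) (hw : w y < w x) :
    ∃ i : Fin (n-1), (x:ℕ) ≤ (i:ℕ) ∧ (i:ℕ)+1 ≤ (y:ℕ) ∧ w (fB i) < w (fA i) := by
  have h : (y:ℕ) = (x:ℕ) + ((y:ℕ) - (x:ℕ) - 1) + 1 := by
    have := (Fin.lt_def).mp hxy; omega
  exact exists_descent_aux w _ x y h hw

/-- N2: bubble sort -/
lemma exists_word (w : Equiv.Perm (Fin n)) :
    ∃ l : List (Fin (n-1)), aProd n l = w ∧ l.length = invNum w := by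
  generalize hk : invNum w = k
  induction k using Nat.strong_induction_on generalizing w with
  | _ k ih =>
    rcases Nat.eq_zero_or_pos k with rfl | hpos
    · exact ⟨[], by rw [aProd_nil, eq_one_of_invNum_zero hk], by simp [hk]⟩
    · have hne : (invSet w).Nonempty := by
        apply Finset.card_pos.mp
        rw [show (invSet w).card = invNum w from rfl, hk]; omega
      obtain ⟨q, hq⟩ := hne
      rw [mem_invSet] at hq
      obtain ⟨i, _, _, hdesc⟩ := exists_descent hq.1 hq.2
      have hstep := invNum_mul_aGen_gt w i hdesc
      obtain ⟨m, hm, hml⟩ := ih (invNum (w * aGen n i)) (by omega) (w * aGen n i) rfl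
      refine ⟨m ++ [i], ?_, ?_⟩
      · rw [aProd_append, aProd_singleton, hm, mul_assoc, aGen_mul_self, mul_one]
      · simp only [List.length_append, List.length_singleton, hml]; omega

lemma reduced_iff {l : List (Fin (n-1))} {w : Equiv.Perm (Fin n)} :
    IsReducedWordA n l w ↔ aProd n l = w ∧ l.length = invNum w := by
  constructor
  · rintro ⟨hp, hmin⟩
    subst hp
    rcases exists_word (aProd n l) with ⟨m, hm, hlen⟩
    exact ⟨rfl, le_antisymm (by rw [← hlen]; exact hmin m hm) (invNum_aProd_le l)⟩
  · rintro ⟨hp, hlen⟩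
    subst hp
    exact ⟨rfl, fun l' hl' => by rw [hlen, ← hl']; exact invNum_aProd_le l'⟩


lemma reduced_prefix {l1 l2 : List (Fin (n-1))} {w : Equiv.Perm (Fin n)}
    (h : IsReducedWordA n (l1 ++ l2) w) : IsReducedWordA n l1 (aProd n l1) := by
  refine ⟨rfl, fun l' hl' => ?_⟩
  have h2 := h.2 (l' ++ l2) (by rw [aProd_append, hl', ← aProd_append, h.1])
  simp only [List.length_append] at h2
  omega

lemma reduced_reverse {l : List (Fin (n-1))} {w : Equiv.Perm (Fin n)}
    (h : IsReducedWordA n l w) : IsReducedWordA n l.reverse w⁻¹ := by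
  refine ⟨by rw [aProd_reverse, h.1], fun l' hl' => ?_⟩
  have h1 : aProd n l'.reverse = w := by rw [aProd_reverse, hl', inv_inv]
  have h2 := h.2 _ h1
  simpa using h2

lemma step_lt {l : List (Fin (n-1))} {p : Fin (n-1)} {w : Equiv.Perm (Fin n)}
    (h : IsReducedWordA n (l ++ [p]) w) :
    aProd n l (fA p) < aProd n l (fB p) := by
  have hpre := reduced_prefix h
  have hl : l.length = invNum (aProd n l) := (reduced_iff.mp hpre).2
  have hw : (l ++ [p]).length = invNum w := (reduced_iff.mp h).2
  rcases lt_or_gt_of_ne (apply_fA_ne_fB (aProd n l) p) with hlt | hgt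
  · exact hlt
  · exfalso
    have h2 := invNum_mul_aGen_gt (aProd n l) p hgt
    have hwp : w = aProd n l * aGen n p := by
      rw [← h.1, aProd_append, aProd_singleton]
    rw [hwp] at hw
    simp only [List.length_append, List.length_singleton] at hw
    omega

lemma aGen_apply_fA (i : Fin (n-1)) : aGen n i (fA i) = fB i := Equiv.swap_apply_left _ _
lemma aGen_apply_fB (i : Fin (n-1)) : aGen n i (fB i) = fA i := Equiv.swap_apply_right _ _

lemma aGen_apply_ne (i : Fin (n-1)) (x : Fin n) (h1 : (x:ℕ) ≠ (i:ℕ))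
    (h2 : (x:ℕ) ≠ (i:ℕ)+1) : aGen n i x = x := by
  rw [aGen_eq]
  exact Equiv.swap_apply_of_ne_of_ne (fun hc => h1 (congrArg Fin.val hc))
    (fun hc => h2 (congrArg Fin.val hc))

lemma chain_of_reduced {m : List (Fin (n-1))} {i j : Fin (n-1)} {w : Equiv.Perm (Fin n)}
    (hij : (i:ℕ)+1 = (j:ℕ))
    (h : IsReducedWordA n (m ++ [i, j, i]) w) :
    aProd n m (fA i) < aProd n m (fB i) ∧ aProd n m (fB i) < aProd n m (fB j) := by
  have hj := j.isLt
  set u := aProd n m with hu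
  have hBA : fA j = fB i := Fin.ext (by simp [fA, fB]; omega)
  have e1 : m ++ [i, j, i] = ((m ++ [i]) ++ [j]) ++ [i] := by simp
  have h3 : IsReducedWordA n (((m ++ [i]) ++ [j]) ++ [i]) w := by rwa [e1] at h
  have h2 : IsReducedWordA n ((m ++ [i]) ++ [j]) (aProd n ((m ++ [i]) ++ [j])) :=
    reduced_prefix h3
  have h1 : IsReducedWordA n (m ++ [i]) (aProd n (m ++ [i])) := reduced_prefix h2
  have s1 := step_lt h1
  have s3 := step_lt h3
  rw [← hu] at s1
  refine ⟨s1, ?_⟩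
  -- compute aProd ((m ++ [i]) ++ [j]) = u * aGen i * aGen j
  have hp : aProd n ((m ++ [i]) ++ [j]) = u * aGen n i * aGen n j := by
    rw [aProd_append, aProd_append, aProd_singleton, aProd_singleton, hu]
  rw [hp] at s3
  have eA : (u * aGen n i * aGen n j) (fA i) = u (fB i) := by
    rw [Equiv.Perm.mul_apply, Equiv.Perm.mul_apply]
    rw [aGen_apply_ne j (fA i) (by simp [fA]; omega) (by simp [fA]; omega)]
    rw [aGen_apply_fA]
  have eB : (u * aGen n i * aGen n j) (fB i) = u (fB j) := by
    rw [Equiv.Perm.mul_apply, Equiv.Perm.mul_apply]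
    rw [← hBA, aGen_apply_fA]
    rw [aGen_apply_ne i (fB j) (by simp [fB]; omega) (by simp [fB]; omega)]
  rw [eA, eB] at s3
  exact s3

lemma braid_eq_swap1 {i j : Fin (n-1)} (hij : (i:ℕ)+1 = (j:ℕ)) :
    aGen n i * aGen n j * aGen n i = Equiv.swap (fA i) (fB j) := by
  have hj := j.isLt
  have hBA : fA j = fB i := Fin.ext (by simp [fA, fB]; omega)
  have hCB : (fB j : Fin n) ≠ fB i := by
    intro hc; have := congrArg Fin.val hc; simp [fB] at this; omega
  have hCA : (fB j : Fin n) ≠ fA i := by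
    intro hc; have := congrArg Fin.val hc; simp [fA, fB] at this; omega
  rw [aGen_eq i, aGen_eq j, hBA]
  rw [Equiv.swap_comm (fA i) (fB i), Equiv.swap_comm (fB i) (fB j)]
  exact Equiv.swap_mul_swap_mul_swap hCB hCA

lemma braid_eq_swap2 {i j : Fin (n-1)} (hij : (i:ℕ)+1 = (j:ℕ)) :
    aGen n j * aGen n i * aGen n j = Equiv.swap (fA i) (fB j) := by
  have hj := j.isLt
  have hBA : fA j = fB i := Fin.ext (by simp [fA, fB]; omega)
  have hAB : (fA i : Fin n) ≠ fB i := ne_of_lt (fA_lt_fB i)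
  have hAC : (fA i : Fin n) ≠ fB j := by
    intro hc; have := congrArg Fin.val hc; simp [fA, fB] at this; omega
  rw [aGen_eq i, aGen_eq j, hBA]
  rw [show Equiv.swap (fB i) (fB j) * Equiv.swap (fA i) (fB i) * Equiv.swap (fB i) (fB j)
      = Equiv.swap (fB j) (fA i) from Equiv.swap_mul_swap_mul_swap hAB hAC]
  exact Equiv.swap_comm _ _

lemma aProd_triple (a b c : Fin (n-1)) :
    aProd n [a, b, c] = aGen n a * aGen n b * aGen n c := by
  simp [aProd, mul_assoc]

lemma exists_pattern_of_braid {pre suf : List (Fin (n-1))} {i j : Fin (n-1)}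
    {w : Equiv.Perm (Fin n)}
    (hij : (i:ℕ)+1 = (j:ℕ)) (h : IsReducedWordA n (pre ++ [i, j, i] ++ suf) w) :
    ∃ a b c : Fin n, a < b ∧ b < c ∧ w c < w b ∧ w b < w a := by
  have hj := j.isLt
  set u := aProd n pre with hu
  set v := aProd n suf with hv
  have hpre : IsReducedWordA n (pre ++ [i,j,i]) (aProd n (pre ++ [i,j,i])) := by
    have e : pre ++ [i,j,i] ++ suf = (pre ++ [i,j,i]) ++ suf := by simp
    exact reduced_prefix (by rwa [e] at h)
  obtain ⟨hu1, hu2⟩ := chain_of_reduced hij hpre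
  rw [← hu] at hu1 hu2
  have hrev : IsReducedWordA n (pre ++ [i,j,i] ++ suf).reverse w⁻¹ := reduced_reverse h
  have e2 : (pre ++ [i,j,i] ++ suf).reverse = (suf.reverse ++ [i,j,i]) ++ pre.reverse := by
    simp
  have hsuf : IsReducedWordA n (suf.reverse ++ [i,j,i])
      (aProd n (suf.reverse ++ [i,j,i])) := reduced_prefix (by rwa [e2] at hrev)
  obtain ⟨hv1, hv2⟩ := chain_of_reduced hij hsuf
  rw [aProd_reverse, ← hv] at hv1 hv2
  -- w = u * swap (fA i) (fB j) * v
  have hw : w = u * Equiv.swap (fA i) (fB j) * v := by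
    rw [← h.1, aProd_append, aProd_append, aProd_triple, braid_eq_swap1 hij, hu, hv]
  have hswB : Equiv.swap (fA i) (fB j) (fB i) = fB i := by
    apply Equiv.swap_apply_of_ne_of_ne
    · intro hc; have := congrArg Fin.val hc; simp [fA, fB] at this
    · intro hc; have := congrArg Fin.val hc; simp [fB] at this; omega
  have evA : w (v⁻¹ (fA i)) = u (fB j) := by
    rw [hw]
    simp only [Equiv.Perm.mul_apply, Equiv.Perm.inv_def, Equiv.apply_symm_apply, Equiv.swap_apply_left]
  have evB : w (v⁻¹ (fB i)) = u (fB i) := by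
    rw [hw]
    simp only [Equiv.Perm.mul_apply, Equiv.Perm.inv_def, Equiv.apply_symm_apply, hswB]
  have evC : w (v⁻¹ (fB j)) = u (fA i) := by
    rw [hw]
    simp only [Equiv.Perm.mul_apply, Equiv.Perm.inv_def, Equiv.apply_symm_apply, Equiv.swap_apply_right]
  exact ⟨v⁻¹ (fA i), v⁻¹ (fB i), v⁻¹ (fB j), hv1, hv2,
    by rw [evB, evC]; exact hu1, by rw [evA, evB]; exact hu2⟩

lemma avoids_imp_fc {w : Equiv.Perm (Fin n)} (hav : Avoids321 n w) :
    FullyCommutativeA n w := by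
  intro l hl pre suf i j heq hor
  rw [heq] at hl
  rcases hor with hij | hji
  · exact hav (exists_pattern_of_braid hij hl)
  · -- j + 1 = i : replace [i,j,i] by [j,i,j]
    have hb : aGen n i * aGen n j * aGen n i = aGen n j * aGen n i * aGen n j := by
      rw [braid_eq_swap2 hji, braid_eq_swap1 hji]
    have hprod : aProd n (pre ++ [j, i, j] ++ suf) = w := by
      rw [← hl.1, aProd_append, aProd_append, aProd_append, aProd_append,
        aProd_triple, aProd_triple, hb]
    have hred : IsReducedWordA n (pre ++ [j, i, j] ++ suf) w := by
      refine ⟨hprod, fun l' h' => ?_⟩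
      have := hl.2 l' h'
      simp only [List.length_append, List.length_cons] at this ⊢
      omega
    exact hav (exists_pattern_of_braid hji hred)

lemma aGen_mul_self' (i : Fin (n-1)) (g : Equiv.Perm (Fin n)) :
    aGen n i * (aGen n i * g) = g := by
  rw [← mul_assoc, aGen_mul_self, one_mul]

lemma lt_of_eqs {α : Type*} [Preorder α] {a b c d : α}
    (h : a < b) (h1 : c = a) (h2 : d = b) : c < d := h1 ▸ h2 ▸ h

lemma not_fc_of_pattern :
    ∀ (w : Equiv.Perm (Fin n)),
      (∃ a b c : Fin n, a < b ∧ b < c ∧ w c < w b ∧ w b < w a) →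
      ∃ (l pre suf : List (Fin (n-1))) (i j : Fin (n-1)), IsReducedWordA n l w ∧
        l = pre ++ [i, j, i] ++ suf ∧ (i:ℕ)+1 = (j:ℕ) := by
  intro w0
  generalize hk : invNum w0 = k
  induction k using Nat.strong_induction_on generalizing w0 with
  | _ k ih =>
  intro hp
  obtain ⟨a, b, c, hab, hbc, h1, h2⟩ := hp
  by_cases hA : ∃ p : ℕ, ∃ (h2n : p+2 < n),
      w0 ⟨p+1, by omega⟩ < w0 ⟨p, by omega⟩ ∧ w0 ⟨p+2, h2n⟩ < w0 ⟨p+1, by omega⟩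
  · -- direct construction
    obtain ⟨p, h2n, hd1, hd2⟩ := hA
    have hpn : p < n := by omega
    have hp1n : p+1 < n := by omega
    obtain ⟨P, hPv⟩ : ∃ P : Fin (n-1), (P:ℕ) = p := ⟨⟨p, by omega⟩, rfl⟩
    obtain ⟨Q, hQv⟩ : ∃ Q : Fin (n-1), (Q:ℕ) = p+1 := ⟨⟨p+1, by omega⟩, rfl⟩
    have hPQ : (P:ℕ)+1 = (Q:ℕ) := by omega
    have hfAP : fA P = ⟨p, hpn⟩ := Fin.ext hPv
    have hfBP : fB P = ⟨p+1, hp1n⟩ := Fin.ext (by show (P:ℕ)+1 = p+1; omega)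
    have hfAQ : fA Q = ⟨p+1, hp1n⟩ := Fin.ext hQv
    have hfBQ : fB Q = ⟨p+2, h2n⟩ := Fin.ext (by show (Q:ℕ)+1 = p+2; omega)
    have hC_ne1 : ((⟨p+2, h2n⟩ : Fin n) : ℕ) ≠ (P:ℕ) := by show p+2 ≠ (P:ℕ); omega
    have hC_ne2 : ((⟨p+2, h2n⟩ : Fin n) : ℕ) ≠ (P:ℕ)+1 := by show p+2 ≠ (P:ℕ)+1; omega
    have eC : aGen n P (⟨p+2, h2n⟩ : Fin n) = ⟨p+2, h2n⟩ := aGen_apply_ne P _ hC_ne1 hC_ne2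
    have hd1' : w0 ⟨p+1, hp1n⟩ < w0 ⟨p, hpn⟩ := hd1
    have hd2' : w0 ⟨p+2, h2n⟩ < w0 ⟨p+1, hp1n⟩ := hd2
    have d1 : invNum w0 = invNum (w0 * aGen n P) + 1 :=
      invNum_mul_aGen_gt w0 P
        (lt_of_eqs hd1' (congrArg w0 hfBP) (congrArg w0 hfAP))
    have e1 : (w0 * aGen n P) (fB Q) = w0 ⟨p+2, h2n⟩ := by
      rw [Equiv.Perm.mul_apply, hfBQ, eC]
    have e2 : (w0 * aGen n P) (fA Q) = w0 ⟨p, hpn⟩ := by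
      rw [Equiv.Perm.mul_apply, hfAQ, ← hfBP, aGen_apply_fB, hfAP]
    have d2 : invNum (w0 * aGen n P) = invNum (w0 * aGen n P * aGen n Q) + 1 :=
      invNum_mul_aGen_gt _ Q (lt_of_eqs (hd2'.trans hd1') e1 e2)
    have e3 : (w0 * aGen n P * aGen n Q) (fB P) = w0 ⟨p+2, h2n⟩ := by
      rw [Equiv.Perm.mul_apply, Equiv.Perm.mul_apply,
        show fB P = fA Q from by rw [hfBP, hfAQ], aGen_apply_fA, hfBQ, eC]
    have e4 : (w0 * aGen n P * aGen n Q) (fA P) = w0 ⟨p+1, hp1n⟩ := by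
      have hne1 : ((fA P : Fin n) : ℕ) ≠ (Q:ℕ) := by show (P:ℕ) ≠ (Q:ℕ); omega
      have hne2 : ((fA P : Fin n) : ℕ) ≠ (Q:ℕ)+1 := by show (P:ℕ) ≠ (Q:ℕ)+1; omega
      rw [Equiv.Perm.mul_apply, Equiv.Perm.mul_apply, aGen_apply_ne Q _ hne1 hne2,
        aGen_apply_fA, hfBP]
    have d3 : invNum (w0 * aGen n P * aGen n Q)
        = invNum (w0 * aGen n P * aGen n Q * aGen n P) + 1 :=
      invNum_mul_aGen_gt _ P (lt_of_eqs hd2' e3 e4)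
    obtain ⟨m, hm, hml⟩ := exists_word (w0 * aGen n P * aGen n Q * aGen n P)
    refine ⟨m ++ [P, Q, P], m, [], P, Q, ?_, by simp, hPQ⟩
    rw [reduced_iff]
    refine ⟨?_, ?_⟩
    · rw [aProd_append, aProd_triple, hm]
      calc w0 * aGen n P * aGen n Q * aGen n P * (aGen n P * aGen n Q * aGen n P)
          = w0 * aGen n P * aGen n Q * (aGen n P * aGen n P) * (aGen n Q * aGen n P) := by
            simp only [mul_assoc]
        _ = w0 * aGen n P * (aGen n Q * aGen n Q) * aGen n P := by
            rw [aGen_mul_self, mul_one]; simp only [mul_assoc]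
        _ = w0 * (aGen n P * aGen n P) := by
            rw [aGen_mul_self, mul_one]; simp only [mul_assoc]
        _ = w0 := by rw [aGen_mul_self, mul_one]
    · simp only [List.length_append, List.length_cons, List.length_nil, hml]
      omega
  · -- recursive case: find descent keeping a pattern
    push_neg at hA
    obtain ⟨i1, hi1a, hi1b, hdesc1⟩ := exists_descent hab h2
    obtain ⟨i2, hi2a, hi2b, hdesc2⟩ := exists_descent hbc h1
    have key : ∃ d : Fin (n-1), w0 (fB d) < w0 (fA d) ∧
        ¬((a:ℕ) = (d:ℕ) ∧ (b:ℕ) = (d:ℕ)+1) ∧ ¬((b:ℕ) = (d:ℕ) ∧ (c:ℕ) = (d:ℕ)+1) := by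
      by_cases hc1 : (a:ℕ) = (i1:ℕ) ∧ (b:ℕ) = (i1:ℕ)+1
      · by_cases hc2 : (b:ℕ) = (i2:ℕ) ∧ (c:ℕ) = (i2:ℕ)+1
        · -- consecutive triple: contradiction with hA
          exfalso
          have hcn := c.isLt
          have hab' : (a:ℕ) < (b:ℕ) := hab
          have hbc' : (b:ℕ) < (c:ℕ) := hbc
          have h2n : (a:ℕ)+2 < n := by omega
          have hb : (⟨(a:ℕ)+1, by omega⟩ : Fin n) = b := Fin.ext (by simp; omega)
          have ha : (⟨(a:ℕ), by omega⟩ : Fin n) = a := Fin.ext rfl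
          have hc : (⟨(a:ℕ)+2, h2n⟩ : Fin n) = c := Fin.ext (by simp; omega)
          exact absurd (hA (a:ℕ) h2n (lt_of_eqs h2 (congrArg w0 hb) (congrArg w0 ha)))
            (not_le.mpr (lt_of_eqs h1 (congrArg w0 hc) (congrArg w0 hb)))
        · have hab' : (a:ℕ) < (b:ℕ) := hab
          exact ⟨i2, hdesc2, fun ⟨x1, _⟩ => by omega, hc2⟩
      · have hbc' : (b:ℕ) < (c:ℕ) := hbc
        exact ⟨i1, hdesc1, hc1, fun ⟨x1, _⟩ => by omega⟩
    obtain ⟨d, hdesc, hna, hnb⟩ := key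
    set w1 := w0 * aGen n d with hw1
    have hdec : invNum w0 = invNum w1 + 1 := invNum_mul_aGen_gt w0 d hdesc
    have hss : ∀ x, aGen n d (aGen n d x) = x := fun x => by
      rw [aGen_eq]; exact Equiv.swap_apply_self _ _ _
    have hpat : ∃ x y z : Fin n, x < y ∧ y < z ∧ w1 z < w1 y ∧ w1 y < w1 x := by
      refine ⟨aGen n d a, aGen n d b, aGen n d c,
        swap_pair_lt d hab hna, swap_pair_lt d hbc hnb, ?_, ?_⟩
      · show w1 (aGen n d c) < w1 (aGen n d b)
        rw [hw1]
        simp only [Equiv.Perm.mul_apply, hss]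
        exact h1
      · show w1 (aGen n d b) < w1 (aGen n d a)
        rw [hw1]
        simp only [Equiv.Perm.mul_apply, hss]
        exact h2
    obtain ⟨l', pre, suf, i, j, hred', heq', hij⟩ :=
      ih (invNum w1) (by omega) w1 rfl hpat
    refine ⟨l' ++ [d], pre, suf ++ [d], i, j, ?_, by simp [heq'], hij⟩
    rw [reduced_iff]
    constructor
    · rw [aProd_append, aProd_singleton, (reduced_iff.mp hred').1, hw1,
        mul_assoc, aGen_mul_self, mul_one]
    · have := (reduced_iff.mp hred').2
      simp only [List.length_append, List.length_singleton, this]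
      omega

end FCProof

/-- a permutation is fully commutative iff it avoids the pattern `321`. -/
theorem fullyCommutative_iff_avoids321 (n : ℕ) (w : Equiv.Perm (Fin n)) :
    FullyCommutativeA n w ↔ Avoids321 n w := by
  constructor
  · intro hfc
    by_contra hnot
    simp only [Avoids321, not_not] at hnot
    obtain ⟨l, pre, suf, i, j, hred, heq, hij⟩ := not_fc_of_pattern w hnot
    exact hfc l hred pre suf i j heq (Or.inl hij)
  · intro hav
    exact avoids_imp_fc hav

end Paper
end
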